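/- arXiv:1712.06976 — 8 statements merged into one kernel-verified Lean document; each statement's English description precedes it below -/
import Mathlib

section
/- Set φ⁻ := q*'/ω, which solves L φ⁻ = 0 on ℝ. Let α > 0 and let φ⁺ : ℝ → ℝ be any twice continuously differentiable solution of L φ⁺ = 0 such that φ⁺(x) → 1 as x → +∞ and sup_{x≥0} e^{α x} |φ⁺'(x)| < ∞. Then the Wronskian W₀(y) := φ⁺(y) φ⁻'(y) − φ⁺'(y) φ⁻(y) satisfies W₀(y) ≠ 0 for every y ∈ ℝ; in fact W₀(y) → −γ* b as y → +∞. -/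
open Filter


lemma pow_exp_aux (n : ℕ) {c : ℝ} (hc : 0 < c) :
    Tendsto (fun x : ℝ => x ^ n * Real.exp (-(c * x))) atTop (nhds 0) := by
  have h1 : Tendsto (fun x : ℝ => (c*x)^n * Real.exp (-(c*x))) atTop (nhds 0) :=
    (Real.tendsto_pow_mul_exp_neg_atTop_nhds_zero n).comp (tendsto_id.const_mul_atTop hc)
  have h2 := h1.const_mul ((c:ℝ)^n)⁻¹
  rw [mul_zero] at h2
  refine h2.congr fun x => ?_
  rw [mul_pow]; field_simp

lemma cd_deriv {g : ℝ → ℝ} (hg : ContDiff ℝ 2 g) : ContDiff ℝ 1 (deriv g) := by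
  rw [show (2 : WithTop ℕ∞) = 1 + 1 by norm_num, contDiff_succ_iff_deriv] at hg
  exact hg.2.2

lemma quad_aux {f : ℝ → ℝ} (hf : ContDiff ℝ 2 f) (hf0 : f 0 = 0) :
    ∃ K, 0 ≤ K ∧ ∀ u ∈ Set.Ioo (0:ℝ) 1, |f u - deriv f 0 * u| ≤ K * u^2 := by
  have hf1 : ContDiff ℝ 1 (deriv f) := cd_deriv hf
  have hfd : Differentiable ℝ f := hf.differentiable (by norm_num)
  have hfd1 : Differentiable ℝ (deriv f) := hf1.differentiable one_ne_zero
  have hcont : Continuous (fun t => |deriv (deriv f) t|) :=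
    (contDiff_one_iff_deriv.mp hf1).2.abs
  obtain ⟨z, hz, hmax⟩ := isCompact_Icc.exists_isMaxOn (⟨0, by norm_num⟩ :
    (Set.Icc (0:ℝ) 1).Nonempty) hcont.continuousOn
  refine ⟨|deriv (deriv f) z|, abs_nonneg _, fun u hu => ?_⟩
  obtain ⟨hu0, hu1⟩ := hu
  obtain ⟨c, hc, hcq⟩ := exists_deriv_eq_slope f hu0 hfd.continuous.continuousOn
    hfd.differentiableOn
  obtain ⟨d, hd, hdq⟩ := exists_deriv_eq_slope (deriv f) hc.1 hfd1.continuous.continuousOn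
    hfd1.differentiableOn
  have hc0 : (0:ℝ) < c := hc.1
  have hfu : f u = deriv f c * u := by
    rw [hf0, sub_zero, sub_zero] at hcq
    field_simp at hcq
    linarith [hcq]
  have hfc : deriv f c - deriv f 0 = deriv (deriv f) d * c := by
    rw [sub_zero] at hdq
    field_simp at hdq
    linarith [hdq]
  have hdIcc : d ∈ Set.Icc (0:ℝ) 1 := ⟨hd.1.le, by nlinarith [hd.2, hc.2, hu1]⟩
  have hKd := hmax hdIcc
  calc |f u - deriv f 0 * u| = |deriv (deriv f) d| * (c * u) := by
        rw [hfu, ← sub_mul, hfc, abs_mul, abs_mul]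
        rw [abs_of_pos hc0, abs_of_pos hu0, mul_assoc]
    _ ≤ |deriv (deriv f) z| * u ^ 2 := by
        have : c * u ≤ u ^ 2 := by nlinarith [hc.2]
        have h2 : (0:ℝ) ≤ c * u := by positivity
        exact mul_le_mul hKd this h2 (abs_nonneg _)

set_option maxHeartbeats 2000000 in
/-- Nonvanishing of the Wronskian (Evans function) at `λ = 0`: with `φ⁻ = q*'/ω` and any
bounded-derivative solution `φ⁺` of `L φ⁺ = 0` tending to `1` at `+∞`, the Wronskian
`W₀(y) = φ⁺ φ⁻' − φ⁺' φ⁻` never vanishes and tends to `−γ* b` at `+∞`. -/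
theorem wronskian_nonzero_at_zero
    (f : ℝ → ℝ) (hf : ContDiff ℝ 2 f)
    (hf0 : f 0 = 0) (hf1 : f 1 = 0)
    (hf'0 : 0 < deriv f 0) (hf'1 : deriv f 1 < 0)
    (hf'' : ∀ u ∈ Set.Ioo (0:ℝ) 1, deriv (deriv f) u < 0)
    (cs γs : ℝ) (hcs : cs = 2 * Real.sqrt (deriv f 0)) (hγs : γs = cs / 2)
    (q : ℝ → ℝ) (hq : ContDiff ℝ 2 q)
    (hqrange : ∀ x, q x ∈ Set.Ioo (0:ℝ) 1)
    (hqanti : StrictAnti q)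
    (hqode : ∀ x, deriv (deriv q) x + cs * deriv q x + f (q x) = 0)
    (hqbot : Tendsto q atBot (nhds 1))
    (hqtop : Tendsto q atTop (nhds 0))
    (a b : ℝ) (hb : 0 < b)
    (hasym : ∃ Ca X : ℝ, ∀ x ≥ X,
      |q x - (a + b * x) * Real.exp (-γs * x)| ≤ Ca * x ^ 2 * Real.exp (-2 * γs * x) ∧
      |deriv q x - (b - γs * (a + b * x)) * Real.exp (-γs * x)| ≤
        Ca * x ^ 2 * Real.exp (-2 * γs * x))
    (β : ℝ) (hβ : 0 < β) (hβ' : β < -cs / 2 + Real.sqrt (cs ^ 2 / 4 - deriv f 1))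
    (ω : ℝ → ℝ) (hωpos : ∀ x, 0 < ω x) (hωbdd : ∃ M, ∀ x, ω x ≤ M)
    (hωsmooth : ContDiff ℝ (⊤ : ℕ∞) ω)
    (hωright : ∀ x ≥ (1:ℝ), ω x = Real.exp (-γs * x))
    (hωleft : ∀ x ≤ (-1:ℝ), ω x = Real.exp (β * x))
    (hω0 : ω 0 = 1)
    (ζ₁ ζ₀ : ℝ → ℝ)
    (hζ₁ : ζ₁ = fun x => cs + 2 * deriv ω x / ω x)
    (hζ₀ : ζ₀ = fun x => deriv f (q x) + cs * deriv ω x / ω x + deriv (deriv ω) x / ω x)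
    (φm : ℝ → ℝ) (hφm : φm = fun x => deriv q x / ω x)
    (hφmsol : ∀ x, deriv (deriv φm) x + ζ₁ x * deriv φm x + ζ₀ x * φm x = 0)
    (α : ℝ) (hα : 0 < α)
    (φp : ℝ → ℝ) (hφp : ContDiff ℝ 2 φp)
    (hφpsol : ∀ x, deriv (deriv φp) x + ζ₁ x * deriv φp x + ζ₀ x * φp x = 0)
    (hφplim : Tendsto φp atTop (nhds 1))
    (hφp' : ∃ M, ∀ x ≥ (0:ℝ), Real.exp (α * x) * |deriv φp x| ≤ M) :
    (∀ y, φp y * deriv φm y - deriv φp y * φm y ≠ 0) ∧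
    Tendsto (fun y => φp y * deriv φm y - deriv φp y * φm y) atTop (nhds (-γs * b)) := by
  -- basic positivity
  have hsq : 0 < Real.sqrt (deriv f 0) := Real.sqrt_pos.mpr hf'0
  have hγpos : 0 < γs := by rw [hγs, hcs]; linarith
  have hγsq : γs ^ 2 = deriv f 0 := by
    rw [hγs, hcs, show 2 * Real.sqrt (deriv f 0) / 2 = Real.sqrt (deriv f 0) by ring]
    exact Real.sq_sqrt hf'0.le
  have hcs2 : cs = 2 * γs := by rw [hγs]; ring
  have hωne : ∀ x, ω x ≠ 0 := fun x => (hωpos x).ne'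
  -- regularity
  have hq1 : ContDiff ℝ 1 (deriv q) := cd_deriv hq
  have hq'' : ∀ x, deriv (deriv q) x = -(cs * deriv q x) - f (q x) := fun x => by
    linarith [hqode x]
  have hq2 : ContDiff ℝ 2 (deriv q) := by
    rw [show (2 : WithTop ℕ∞) = 1 + 1 by norm_num, contDiff_succ_iff_deriv]
    refine ⟨hq1.differentiable one_ne_zero, by simp, ?_⟩
    have : deriv (deriv q) = fun x => -(cs * deriv q x) - f (q x) := funext hq''
    rw [this]
    exact ((contDiff_const.mul hq1).neg.sub ((hf.comp hq).of_le (by norm_num)))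
  have hωC : ContDiff ℝ 2 ω := hωsmooth.of_le (WithTop.coe_le_coe.mpr (le_top : (2:ℕ∞) ≤ ⊤))
  have hφm2 : ContDiff ℝ 2 φm := by rw [hφm]; exact hq2.div hωC hωne
  have hφm1 : ContDiff ℝ 1 (deriv φm) := cd_deriv hφm2
  have hdφm : Differentiable ℝ φm := hφm2.differentiable (by norm_num)
  have hddφm : Differentiable ℝ (deriv φm) := hφm1.differentiable one_ne_zero
  have hdφp : Differentiable ℝ φp := hφp.differentiable (by norm_num)
  have hddφp : Differentiable ℝ (deriv φp) := (cd_deriv hφp).differentiable one_ne_zero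
  have hdω : Differentiable ℝ ω := hωC.differentiable (by norm_num)
  -- the Wronskian and its ODE
  set W : ℝ → ℝ := fun y => φp y * deriv φm y - deriv φp y * φm y with hWdef
  have hWd : ∀ y, HasDerivAt W (-(ζ₁ y) * W y) y := by
    intro y
    have h1 : HasDerivAt φp (deriv φp y) y := (hdφp y).hasDerivAt
    have h2 : HasDerivAt (deriv φp) (deriv (deriv φp) y) y := (hddφp y).hasDerivAt
    have h3 : HasDerivAt φm (deriv φm y) y := (hdφm y).hasDerivAt
    have h4 : HasDerivAt (deriv φm) (deriv (deriv φm) y) y := (hddφm y).hasDerivAt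
    have h5 := (h1.mul h4).sub (h2.mul h3)
    refine h5.congr_deriv ?_
    have e1 : deriv (deriv φp) y = -(ζ₁ y * deriv φp y) - ζ₀ y * φp y := by
      linarith [hφpsol y]
    have e2 : deriv (deriv φm) y = -(ζ₁ y * deriv φm y) - ζ₀ y * φm y := by
      linarith [hφmsol y]
    rw [e1, e2]; simp only [hWdef]; ring
  -- exponential-integrating-factor function is constant
  set h : ℝ → ℝ := fun y => W y * ((ω y) ^ 2 * Real.exp (cs * y)) with hhdef
  have hh : ∀ y, HasDerivAt h 0 y := by
    intro y
    have hω1 : HasDerivAt ω (deriv ω y) y := (hdω y).hasDerivAt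
    have hexp : HasDerivAt (fun y : ℝ => Real.exp (cs * y)) (Real.exp (cs * y) * (cs * 1)) y :=
      ((hasDerivAt_id y).const_mul cs).exp
    have hg : HasDerivAt (fun y => (ω y) ^ 2 * Real.exp (cs * y))
        ((2 * ω y ^ 1 * deriv ω y) * Real.exp (cs * y)
          + (ω y) ^ 2 * (Real.exp (cs * y) * (cs * 1))) y := (hω1.pow 2).mul hexp
    have := (hWd y).mul hg
    refine this.congr_deriv ?_
    rw [hζ₁]
    have hne := hωne y
    field_simp
    ring
  have hconst : ∀ x y, h x = h y :=
    is_const_of_deriv_eq_zero (fun y => (hh y).differentiableAt) (fun y => (hh y).deriv)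
  -- the limit (proved below)
  have hlim : Tendsto W atTop (nhds (-γs * b)) := by
    obtain ⟨Ca, X, hCa⟩ := hasym
    set C := |Ca| with hCdef
    have hC0 : (0:ℝ) ≤ C := abs_nonneg _
    obtain ⟨K, hK0, hKq⟩ := quad_aux hf hf0
    obtain ⟨M, hM⟩ := hφp'
    have hM0 : (0:ℝ) ≤ M := le_trans (by positivity) (hM 0 le_rfl)
    -- formula for φm on [1, ∞)
    have hφmx : ∀ x ≥ (1:ℝ), φm x = deriv q x * Real.exp (γs * x) := by
      intro x hx
      rw [hφm]
      simp only
      rw [hωright x hx, show -γs * x = -(γs * x) by ring, Real.exp_neg, div_inv_eq_mul]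
    -- formula for deriv φm on (1, ∞)
    have hdφmx : ∀ x > (1:ℝ), deriv φm x
        = -(γs * (deriv q x * Real.exp (γs * x))) - f (q x) * Real.exp (γs * x) := by
      intro x hx
      have hev : φm =ᶠ[nhds x] fun y => deriv q y * Real.exp (γs * y) := by
        filter_upwards [Ioi_mem_nhds hx] with y hy
        exact hφmx y (le_of_lt hy)
      have hg : HasDerivAt (fun y => deriv q y * Real.exp (γs * y))
          (deriv (deriv q) x * Real.exp (γs * x)
            + deriv q x * (Real.exp (γs * x) * (γs * 1))) x :=
        (((hq1.differentiable one_ne_zero) x).hasDerivAt.mul (((hasDerivAt_id x).const_mul γs).exp))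
      rw [hev.deriv_eq, hg.deriv, hq'' x, hcs2]
      ring
    have tri : ∀ p r s : ℝ, |p + r + s| ≤ |p| + |r| + |s| := fun p r s =>
      (abs_add_le _ _).trans (by linarith [abs_add_le p r])
    -- part 1 : deriv φp * φm → 0
    have T1 : Tendsto (fun x => deriv φp x * φm x) atTop (nhds 0) := by
      have hgt : Tendsto (fun x : ℝ =>
          (M * (C + b + γs*|a| + γs*b)) * (x ^ 2 * Real.exp (-(α * x)))) atTop (nhds 0) := by
        have := (pow_exp_aux 2 hα).const_mul (M * (C + b + γs*|a| + γs*b))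
        rwa [mul_zero] at this
      apply squeeze_zero_norm' ?_ hgt
      filter_upwards [eventually_ge_atTop X, eventually_ge_atTop (1:ℝ)] with x hxX hx1
      have hx0 : (0:ℝ) ≤ x := by linarith
      obtain ⟨hqb, hdqb⟩ := hCa x hxX
      have hE1 : Real.exp (-2*γs*x) * Real.exp (γs*x) = Real.exp (-(γs*x)) := by
        rw [← Real.exp_add]; ring_nf
      have hEone : Real.exp (-(γs*x)) ≤ 1 := Real.exp_le_one_iff.mpr (by nlinarith)
      have key : |φm x| ≤ (C + b + γs*|a| + γs*b) * x ^ 2 := by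
        rw [hφmx x hx1]
        have split : deriv q x * Real.exp (γs*x)
            = (deriv q x - (b - γs*(a+b*x)) * Real.exp (-γs*x)) * Real.exp (γs*x)
              + (b - γs*(a+b*x)) * (Real.exp (-γs*x) * Real.exp (γs*x)) := by ring
        have hone : Real.exp (-γs*x) * Real.exp (γs*x) = 1 := by
          rw [← Real.exp_add, show -γs*x + γs*x = 0 by ring, Real.exp_zero]
        have h1 : |(deriv q x - (b - γs*(a+b*x)) * Real.exp (-γs*x)) * Real.exp (γs*x)|
            ≤ C * x ^ 2 * Real.exp (-(γs*x)) := by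
          rw [abs_mul, abs_of_pos (Real.exp_pos _)]
          calc |deriv q x - (b - γs*(a+b*x)) * Real.exp (-γs*x)| * Real.exp (γs*x)
              ≤ (Ca * x ^ 2 * Real.exp (-2*γs*x)) * Real.exp (γs*x) :=
                mul_le_mul_of_nonneg_right hdqb (Real.exp_pos _).le
            _ = Ca * x ^ 2 * Real.exp (-(γs*x)) := by rw [mul_assoc, hE1]
            _ ≤ C * x ^ 2 * Real.exp (-(γs*x)) := by
                nlinarith [mul_nonneg (sq_nonneg x) (Real.exp_pos (-(γs*x))).le,
                  le_abs_self Ca]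
        have h2 : |b - γs*(a+b*x)| ≤ b + γs*|a| + γs*b*x := by
          rw [abs_le]
          constructor <;>
            nlinarith [mul_le_mul_of_nonneg_left (neg_abs_le a) hγpos.le,
              mul_le_mul_of_nonneg_left (le_abs_self a) hγpos.le,
              mul_nonneg (mul_nonneg hγpos.le hb.le) hx0]
        calc |deriv q x * Real.exp (γs*x)|
            ≤ |(deriv q x - (b - γs*(a+b*x)) * Real.exp (-γs*x)) * Real.exp (γs*x)|
              + |(b - γs*(a+b*x)) * (Real.exp (-γs*x) * Real.exp (γs*x))| := by
              rw [split]; exact abs_add_le _ _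
          _ ≤ C * x ^ 2 * Real.exp (-(γs*x)) + (b + γs*|a| + γs*b*x) := by
              rw [hone, mul_one]; exact add_le_add h1 h2
          _ ≤ (C + b + γs*|a| + γs*b) * x ^ 2 := by
              have hxx : x ≤ x ^ 2 := by nlinarith
              have h1x : (1:ℝ) ≤ x ^ 2 := by nlinarith
              nlinarith [mul_le_mul_of_nonneg_left hEone (mul_nonneg hC0 (sq_nonneg x)),
                mul_le_mul_of_nonneg_left h1x (mul_nonneg hγpos.le (abs_nonneg a)),
                mul_le_mul_of_nonneg_left hxx (mul_nonneg hγpos.le hb.le),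
                mul_le_mul_of_nonneg_left h1x hb.le]
      have hd : |deriv φp x| ≤ M * Real.exp (-(α*x)) := by
        have h := hM x hx0
        have he : (0:ℝ) < Real.exp (α*x) := Real.exp_pos _
        rw [Real.exp_neg, ← div_eq_mul_inv, le_div_iff₀ he]
        linarith [h, mul_comm (Real.exp (α*x)) (|deriv φp x|)]
      calc ‖deriv φp x * φm x‖ = |deriv φp x| * |φm x| := by
            rw [Real.norm_eq_abs, abs_mul]
        _ ≤ (M * Real.exp (-(α*x))) * ((C + b + γs*|a| + γs*b) * x ^ 2) :=
            mul_le_mul hd key (abs_nonneg _) (by positivity)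
        _ = (M * (C + b + γs*|a| + γs*b)) * (x ^ 2 * Real.exp (-(α * x))) := by ring
    -- part 2 : deriv φm → -(γs*b)
    have T2 : Tendsto (fun x => deriv φm x) atTop (nhds (-(γs*b))) := by
      rw [← tendsto_sub_nhds_zero_iff]
      have hgt : Tendsto (fun x : ℝ =>
          (γs*C + γs^2*C + K*(C+|a|+b)^2) * (x ^ 4 * Real.exp (-(γs * x)))) atTop (nhds 0) := by
        have := (pow_exp_aux 4 hγpos).const_mul (γs*C + γs^2*C + K*(C+|a|+b)^2)
        rwa [mul_zero] at this
      apply squeeze_zero_norm' ?_ hgt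
      filter_upwards [eventually_ge_atTop X, eventually_ge_atTop (2:ℝ)] with x hxX hx2
      have hx1 : (1:ℝ) < x := by linarith
      have hx0 : (0:ℝ) ≤ x := by linarith
      obtain ⟨hqb, hdqb⟩ := hCa x hxX
      set E := Real.exp (γs * x) with hEdef
      have hEpos : (0:ℝ) < E := Real.exp_pos _
      have hE1 : Real.exp (-2*γs*x) * E = Real.exp (-(γs*x)) := by
        rw [hEdef, ← Real.exp_add]; ring_nf
      have hone : Real.exp (-γs*x) * E = 1 := by
        rw [hEdef, ← Real.exp_add, show -γs*x + γs*x = 0 by ring, Real.exp_zero]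
      have hone' : E * Real.exp (-(γs*x)) = 1 := by
        rw [hEdef, ← Real.exp_add, show γs*x + -(γs*x) = 0 by ring, Real.exp_zero]
      have hEone : Real.exp (-(γs*x)) ≤ 1 := Real.exp_le_one_iff.mpr (by nlinarith)
      have hepos : (0:ℝ) < Real.exp (-(γs*x)) := Real.exp_pos _
      -- bound on u
      have hu : |deriv q x * E - (b - γs*(a+b*x))| ≤ C * x ^ 2 * Real.exp (-(γs*x)) := by
        have heq : deriv q x * E - (b - γs*(a+b*x))
            = (deriv q x - (b - γs*(a+b*x)) * Real.exp (-γs*x)) * E := by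
          rw [sub_mul, mul_assoc, hone, mul_one]
        rw [heq, abs_mul, abs_of_pos hEpos]
        calc |deriv q x - (b - γs*(a+b*x)) * Real.exp (-γs*x)| * E
            ≤ (Ca * x ^ 2 * Real.exp (-2*γs*x)) * E := mul_le_mul_of_nonneg_right hdqb hEpos.le
          _ = Ca * x ^ 2 * Real.exp (-(γs*x)) := by rw [mul_assoc, hE1]
          _ ≤ C * x ^ 2 * Real.exp (-(γs*x)) := by
              nlinarith [mul_nonneg (sq_nonneg x) hepos.le, le_abs_self Ca]
      -- bound on v
      have hv : |q x * E - (a + b*x)| ≤ C * x ^ 2 * Real.exp (-(γs*x)) := by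
        have heq : q x * E - (a + b*x)
            = (q x - (a + b*x) * Real.exp (-γs*x)) * E := by
          rw [sub_mul, mul_assoc, hone, mul_one]
        rw [heq, abs_mul, abs_of_pos hEpos]
        calc |q x - (a + b*x) * Real.exp (-γs*x)| * E
            ≤ (Ca * x ^ 2 * Real.exp (-2*γs*x)) * E := mul_le_mul_of_nonneg_right hqb hEpos.le
          _ = Ca * x ^ 2 * Real.exp (-(γs*x)) := by rw [mul_assoc, hE1]
          _ ≤ C * x ^ 2 * Real.exp (-(γs*x)) := by
              nlinarith [mul_nonneg (sq_nonneg x) hepos.le, le_abs_self Ca]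
      -- bound on s = q x * E
      have hspos : (0:ℝ) < q x * E := mul_pos (hqrange x).1 hEpos
      have hsle : q x * E ≤ (C + |a| + b) * x ^ 2 := by
        have hxx : x ≤ x ^ 2 := by nlinarith
        have h1x : (1:ℝ) ≤ x ^ 2 := by nlinarith
        nlinarith [le_abs_self (q x * E - (a + b*x)), hv, le_abs_self a,
          mul_le_mul_of_nonneg_left hEone (mul_nonneg hC0 (sq_nonneg x)),
          mul_le_mul_of_nonneg_left h1x (abs_nonneg a),
          mul_le_mul_of_nonneg_left hxx hb.le]
      -- bound on w
      have hqeq : q x = (q x * E) * Real.exp (-(γs*x)) := by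
        rw [mul_assoc, hone', mul_one]
      have hfq : |f (q x) - γs^2 * q x| ≤ K * (q x) ^ 2 := by
        rw [hγsq]; exact hKq (q x) (hqrange x)
      have hw : |(f (q x) - γs^2*q x) * E| ≤ K*(C+|a|+b)^2 * (x ^ 4 * Real.exp (-(γs*x))) := by
        calc |(f (q x) - γs^2*q x) * E| = |f (q x) - γs^2*q x| * E := by
              rw [abs_mul, abs_of_pos hEpos]
          _ ≤ (K * (q x) ^ 2) * E := mul_le_mul_of_nonneg_right hfq hEpos.le
          _ = K * (q x * E) ^ 2 * Real.exp (-(γs*x)) := by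
              rw [mul_pow]
              linear_combination (-(K * q x ^ 2 * E)) * hone'
          _ ≤ K * ((C+|a|+b) * x ^ 2) ^ 2 * Real.exp (-(γs*x)) := by
              have h2 : (q x * E) ^ 2 ≤ ((C+|a|+b) * x ^ 2) ^ 2 :=
                pow_le_pow_left₀ hspos.le hsle 2
              exact mul_le_mul_of_nonneg_right (mul_le_mul_of_nonneg_left h2 hK0) hepos.le
          _ = K*(C+|a|+b)^2 * (x ^ 4 * Real.exp (-(γs*x))) := by ring
      -- assemble
      have hderiv : deriv φm x - (-(γs*b)) =
          (-(γs*(deriv q x * E - (b - γs*(a+b*x)))))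
            + (-(γs^2*(q x * E - (a + b*x))))
            + (-((f (q x) - γs^2*q x) * E)) := by
        rw [hdφmx x hx1]
        ring
      have hx24 : x ^ 2 * Real.exp (-(γs*x)) ≤ x ^ 4 * Real.exp (-(γs*x)) := by
        have h1x : (1:ℝ) ≤ x ^ 2 := by nlinarith
        have hxa : x ^ 2 ≤ x ^ 4 := by
          nlinarith [mul_le_mul_of_nonneg_left h1x (sq_nonneg x)]
        exact mul_le_mul_of_nonneg_right hxa hepos.le
      calc ‖deriv φm x - (-(γs*b))‖
          = |(-(γs*(deriv q x * E - (b - γs*(a+b*x)))))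
            + (-(γs^2*(q x * E - (a + b*x))))
            + (-((f (q x) - γs^2*q x) * E))| := by rw [Real.norm_eq_abs, hderiv]
        _ ≤ |(-(γs*(deriv q x * E - (b - γs*(a+b*x)))))|
            + |(-(γs^2*(q x * E - (a + b*x))))|
            + |(-((f (q x) - γs^2*q x) * E))| := tri _ _ _
        _ = γs*|deriv q x * E - (b - γs*(a+b*x))|
            + γs^2*|q x * E - (a + b*x)|
            + |(f (q x) - γs^2*q x) * E| := by
            rw [abs_neg, abs_neg, abs_neg, abs_mul, abs_mul, abs_of_pos hγpos,
              abs_of_nonneg (sq_nonneg γs)]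
        _ ≤ γs*(C * x ^ 2 * Real.exp (-(γs*x))) + γs^2*(C * x ^ 2 * Real.exp (-(γs*x)))
            + K*(C+|a|+b)^2 * (x ^ 4 * Real.exp (-(γs*x))) :=
            add_le_add (add_le_add (mul_le_mul_of_nonneg_left hu hγpos.le)
              (mul_le_mul_of_nonneg_left hv (sq_nonneg γs))) hw
        _ ≤ (γs*C + γs^2*C + K*(C+|a|+b)^2) * (x ^ 4 * Real.exp (-(γs * x))) := by
            nlinarith [mul_le_mul_of_nonneg_left hx24 (show (0:ℝ) ≤ γs*C by positivity),
              mul_le_mul_of_nonneg_left hx24 (show (0:ℝ) ≤ γs^2*C by positivity)]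
    have hfinal := (hφplim.mul T2).sub T1
    have heq : (1:ℝ) * -(γs*b) - 0 = -γs * b := by ring
    rwa [heq] at hfinal
  refine ⟨?_, hlim⟩
  intro y hy
  have hWz : ∀ z, W z = 0 := by
    intro z
    have h0 : h y = 0 := by
      show (φp y * deriv φm y - deriv φp y * φm y) * (ω y ^ 2 * Real.exp (cs * y)) = 0
      rw [hy]; ring
    have hz : h z = 0 := (hconst z y).trans h0
    have hωz := hωpos z
    have hpos : (0:ℝ) < (ω z) ^ 2 * Real.exp (cs * z) := by positivity
    rcases mul_eq_zero.mp hz with h' | h'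
    · exact h'
    · exact absurd h' hpos.ne'
  have : Tendsto W atTop (nhds 0) := by
    rw [show W = fun _ => (0:ℝ) from funext hWz]
    exact tendsto_const_nhds
  have := tendsto_nhds_unique hlim this
  nlinarith [mul_pos hγpos hb]
end

section
/- Let α > 0, K > 0, M_s > 0, and let ζ₀ : [1,∞) → ℝ be continuous with |ζ₀(x)| ≤ K e^{−α x} for all x ≥ 1. Then there exists C > 0 such that for every λ ∈ ℂ ∖ (−∞,0] with |λ| ≤ M_s there is a twice continuously differentiable solution φ⁺ : [1,∞) → ℂ of p'' + ζ₀ p = λ p such that, writing φ⁺(x) = e^{−√λ x}(1 + θ₁(x,λ)) and φ⁺'(x) = e^{−√λ x}(−√λ + θ₂(x,λ)), one has |θ₁(x,λ)| ≤ C e^{−α x} and |θ₂(x,λ)| ≤ C e^{−α x} for all x ≥ 1, with C independent of λ. -/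
/-!
Put `μ = √λ`, so that `Re μ > 0`, and look for `φ = e^{-μx} (1 + θ)`. Then `φ'' + ζφ = μ²φ`
becomes `θ'' - 2μθ' = -ζ (1 + θ)`, whose solution decaying at `+∞` is a fixed point of the
Volterra operator `θ ↦ ∫_x^∞ k(x,t) ζ(t) (1 + θ(t)) dt`, `k(x,t) = (e^{2μ(x-t)} - 1) / (2μ)`.
Once `ζ₀` is extended continuously to `ℝ`, vanishing on `(-∞, 0]`, this operator acts on bounded
continuous functions on `ℝ`, and `|k| ≤ 1/|μ|` makes some iterate of it a contraction.
The bound `|k(x,t)| ≤ t - x`, which holds for every `Re μ ≥ 0`, turns the integral equation into a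
backward Gronwall inequality giving `|1 + θ| ≤ exp (4K/α²)` on `(0, ∞)`; fed back into the
equation this gives `|θ|, |θ'| = O(e^{-αx})` with constants that depend on `λ` only through
`|√λ| ≤ √M_s`.
-/

/-- Principal complex square root, via the principal branch of `z ^ (1/2)`;
for `z ∉ (-∞, 0]` it has positive real part. -/
noncomputable def csqrt (z : ℂ) : ℂ := z ^ (1/2 : ℂ)

/-- The negative real axis `(-∞, 0]` inside `ℂ`. -/
def negRealAxis : Set ℂ := {z : ℂ | z.im = 0 ∧ z.re ≤ 0}

open MeasureTheory Set Filter Topology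
open scoped BoundedContinuousFunction Complex

theorem hasDerivAt_integral_Ioi {E : Type*} [NormedAddCommGroup E] [NormedSpace ℝ E]
    [CompleteSpace E] {g : ℝ → E} {a x : ℝ} (hg : Continuous g) (hgi : IntegrableOn g (Ioi a))
    (hx : a < x) : HasDerivAt (fun y => ∫ t in Ioi y, g t) (-g x) x := by
  have hsplit : (fun y => (∫ t in Ioi a, g t) - ∫ t in a..y, g t) =ᶠ[𝓝 x]
      fun y => ∫ t in Ioi y, g t := by
    filter_upwards [eventually_gt_nhds hx] with y hy
    rw [← intervalIntegral.integral_Ioi_sub_Ioi hgi hy.le, sub_sub_cancel]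
  exact ((intervalIntegral.integral_hasDerivAt_right (hg.intervalIntegrable _ _)
    (hg.stronglyMeasurableAtFilter _ _) hg.continuousAt).const_sub _).congr_of_eventuallyEq
    hsplit.symm

section Volterra

variable {w : ℝ → ℝ}

theorem integrable_mul_pow_integral_Ioi (hw : Continuous w) (hw0 : ∀ t, 0 ≤ w t)
    (hwi : Integrable w) (n : ℕ) : Integrable fun t => w t * (∫ s in Ioi t, w s) ^ n := by
  have hW : Continuous fun t => ∫ s in Ioi t, w s := continuous_iff_continuousAt.2 fun t =>
    (hasDerivAt_integral_Ioi hw hwi.integrableOn (sub_one_lt t)).continuousAt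
  refine hwi.mul_bdd (c := (∫ s, w s) ^ n) (hW.pow n).aestronglyMeasurable
    (ae_of_all _ fun t => ?_)
  have hWt : 0 ≤ ∫ s in Ioi t, w s := setIntegral_nonneg measurableSet_Ioi fun s _ => hw0 s
  rw [norm_pow, Real.norm_of_nonneg hWt]
  exact pow_le_pow_left₀ hWt (setIntegral_le_integral hwi (ae_of_all _ hw0)) n

theorem integral_Ioi_mul_pow_integral_Ioi (hw : Continuous w) (hw0 : ∀ t, 0 ≤ w t)
    (hwi : Integrable w) (n : ℕ) (x : ℝ) :
    ∫ t in Ioi x, w t * (∫ s in Ioi t, w s) ^ n =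
      (∫ s in Ioi x, w s) ^ (n + 1) / (n + 1) := by
  set W := fun y => ∫ s in Ioi y, w s
  have hderiv : ∀ t ∈ Ici x, HasDerivAt (fun y => -(W y ^ (n + 1) / (n + 1)))
      (w t * W t ^ n) t := fun t _ => by
    refine (((hasDerivAt_integral_Ioi hw hwi.integrableOn (sub_one_lt t)).pow (n + 1)).div_const
      ((n : ℝ) + 1)).neg.congr_deriv ?_
    push_cast
    field_simp
    exact mul_comm _ _
  have hlim : Tendsto (fun y => -(W y ^ (n + 1) / (n + 1))) atTop (𝓝 0) := by
    simpa using ((tendsto_integral_Ioi_zero tendsto_id).pow (n + 1)).div_const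
      ((n : ℝ) + 1) |>.neg
  rw [integral_Ioi_of_hasDerivAt_of_tendsto' hderiv
    (integrable_mul_pow_integral_Ioi hw hw0 hwi n).integrableOn hlim]
  ring

variable {E : Type*} [NormedAddCommGroup E] {T : (ℝ →ᵇ E) → ℝ →ᵇ E}

theorem dist_iterate_le_of_dist_le_integral_Ioi (hw : Continuous w) (hw0 : ∀ t, 0 ≤ w t)
    (hwi : Integrable w)
    (hT : ∀ f g x, dist (T f x) (T g x) ≤ ∫ t in Ioi x, w t * dist (f t) (g t))
    (n : ℕ) (f g : ℝ →ᵇ E) (x : ℝ) :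
    dist (T^[n] f x) (T^[n] g x) ≤ dist f g * (∫ s in Ioi x, w s) ^ n / n.factorial := by
  induction n generalizing x with
  | zero => simpa using f.dist_coe_le_dist x
  | succ n ih =>
    rw [Function.iterate_succ_apply', Function.iterate_succ_apply']
    have hbd : IntegrableOn
        (fun t => w t * (dist f g / n.factorial * (∫ s in Ioi t, w s) ^ n)) (Ioi x) := by
      simp_rw [mul_left_comm (w _)]
      exact ((integrable_mul_pow_integral_Ioi hw hw0 hwi n).const_mul _).integrableOn
    calc dist (T (T^[n] f) x) (T (T^[n] g) x)
        ≤ ∫ t in Ioi x, w t * dist (T^[n] f t) (T^[n] g t) := hT _ _ x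
      _ ≤ ∫ t in Ioi x, w t * (dist f g / n.factorial * (∫ s in Ioi t, w s) ^ n) := by
        refine setIntegral_mono_on ?_ hbd measurableSet_Ioi fun t _ => ?_
        · exact (hwi.mul_bdd (continuous_dist.comp ((T^[n] f).continuous.prodMk
            (T^[n] g).continuous)).aestronglyMeasurable
            (ae_of_all _ fun t => by
              simpa using BoundedContinuousFunction.dist_coe_le_dist t)).integrableOn
        · exact mul_le_mul_of_nonneg_left ((ih t).trans_eq (by ring)) (hw0 t)
      _ = dist f g * (∫ s in Ioi x, w s) ^ (n + 1) / (n + 1).factorial := by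
        simp_rw [mul_left_comm (w _), integral_const_mul]
        rw [integral_Ioi_mul_pow_integral_Ioi hw hw0 hwi, Nat.factorial_succ]
        push_cast
        field_simp

theorem exists_isFixedPt_of_dist_le_integral_Ioi [CompleteSpace E] (hw : Continuous w)
    (hw0 : ∀ t, 0 ≤ w t) (hwi : Integrable w)
    (hT : ∀ f g x, dist (T f x) (T g x) ≤ ∫ t in Ioi x, w t * dist (f t) (g t)) :
    ∃ f, Function.IsFixedPt T f := by
  set c := ∫ s, w s
  obtain ⟨n, hn⟩ := ((FloorSemiring.tendsto_pow_div_factorial_atTop c).eventually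
    (gt_mem_nhds zero_lt_one)).exists
  have hc : 0 ≤ c := integral_nonneg hw0
  have hq : 0 ≤ c ^ n / n.factorial := div_nonneg (pow_nonneg hc n) (Nat.cast_nonneg _)
  have hlip : LipschitzWith ⟨c ^ n / n.factorial, hq⟩ T^[n] := by
    refine LipschitzWith.of_dist_le_mul fun f g =>
      (BoundedContinuousFunction.dist_le (mul_nonneg hq dist_nonneg)).2 fun x => ?_
    have hW : 0 ≤ ∫ s in Ioi x, w s := setIntegral_nonneg measurableSet_Ioi fun s _ => hw0 s
    calc dist (T^[n] f x) (T^[n] g x)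
        ≤ dist f g * (∫ s in Ioi x, w s) ^ n / n.factorial :=
          dist_iterate_le_of_dist_le_integral_Ioi hw hw0 hwi hT n f g x
      _ ≤ dist f g * c ^ n / n.factorial := by
          gcongr
          exact setIntegral_le_integral hwi (ae_of_all _ hw0)
      _ = c ^ n / n.factorial * dist f g := by ring
  exact ⟨_, (ContractingWith.isFixedPt_fixedPoint_iterate ⟨hn, hlip⟩ :)⟩

end Volterra

theorem one_add_le_exp_integral_Ioi {u w : ℝ → ℝ} {a x : ℝ} (hu : Continuous u)
    (hw : Continuous w) (hw0 : ∀ t > a, 0 ≤ w t) (hwi : IntegrableOn w (Ioi a))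
    (hwui : IntegrableOn (fun t => w t * (1 + u t)) (Ioi a))
    (h : ∀ y > a, u y ≤ ∫ t in Ioi y, w t * (1 + u t)) (hx : a < x) :
    1 + u x ≤ Real.exp (∫ t in Ioi x, w t) := by
  set P := fun y => ∫ t in Ioi y, w t * (1 + u t)
  set Q := fun y => ∫ t in Ioi y, w t
  -- `G' = w e^{-Q} (P - u) ≥ 0` and `G → 1` at `∞`, so `1 + P ≤ e^Q`.
  set G := fun y => (1 + P y) * Real.exp (-Q y)
  have hG : ∀ y > a, HasDerivAt G (w y * Real.exp (-Q y) * (P y - u y)) y := fun y hy => by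
    have hP := hasDerivAt_integral_Ioi (g := fun t => w t * (1 + u t))
      (hw.mul (continuous_const.add hu)) hwui hy
    have hQ := hasDerivAt_integral_Ioi hw hwi hy
    exact (hP.const_add 1 |>.mul hQ.neg.exp).congr_deriv (by simp only [Pi.neg_apply]; ring)
  have hmono : MonotoneOn G (Ioi a) := by
    refine monotoneOn_of_deriv_nonneg (convex_Ioi a)
      (fun y hy => (hG y hy).continuousAt.continuousWithinAt) ?_ ?_
    · rw [interior_Ioi]
      exact fun y hy => (hG y hy).differentiableAt.differentiableWithinAt
    · rw [interior_Ioi]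
      intro y hy
      rw [(hG y hy).deriv]
      exact mul_nonneg (mul_nonneg (hw0 y hy) (Real.exp_pos _).le) (sub_nonneg.2 (h y hy))
  have hlim : Tendsto G atTop (𝓝 1) := by
    simpa using ((tendsto_integral_Ioi_zero tendsto_id).const_add 1).mul
      (tendsto_integral_Ioi_zero tendsto_id).neg.rexp
  have hGx : G x ≤ 1 := ge_of_tendsto hlim <| (eventually_ge_atTop x).mono fun y hy =>
    hmono hx (hx.trans_le hy) hy
  calc 1 + u x ≤ 1 + P x := by linarith [h x hx]
    _ = G x * Real.exp (Q x) := by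
      simp only [G, mul_assoc, ← Real.exp_add, neg_add_cancel, Real.exp_zero, mul_one]
    _ ≤ Real.exp (Q x) := mul_le_of_le_one_left (Real.exp_pos _).le hGx

theorem contDiff_two_of_hasDerivAt {E : Type*} [NormedAddCommGroup E] [NormedSpace ℝ E]
    {f f' f'' : ℝ → E} (hf : ∀ x, HasDerivAt f (f' x) x)
    (hf' : ∀ x, HasDerivAt f' (f'' x) x) (hf'' : Continuous f'') : ContDiff ℝ 2 f := by
  rw [show (2 : WithTop ℕ∞) = 1 + 1 from rfl, contDiff_succ_iff_deriv,
    funext fun x => (hf x).deriv, contDiff_one_iff_deriv, funext fun x => (hf' x).deriv]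
  exact ⟨fun x => (hf x).differentiableAt, by simp, fun x => (hf' x).differentiableAt, hf''⟩

theorem hasDerivAt_cexp_neg_mul_mul {f : ℝ → ℂ} {f' : ℂ} {x : ℝ} (μ : ℂ)
    (hf : HasDerivAt f f' x) :
    HasDerivAt (fun y : ℝ => cexp (-μ * y) * f y) (cexp (-μ * x) * (f' - μ * f x)) x := by
  have hE : HasDerivAt (fun y : ℝ => cexp (-μ * y)) (cexp (-μ * x) * -μ) x := by
    simpa using ((hasDerivAt_id (x : ℂ)).const_mul (-μ)).cexp.comp_ofReal
  exact (hE.mul hf).congr_deriv (by ring)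

theorem integral_exp_neg_mul_Ioi {b : ℝ} (hb : 0 < b) (c : ℝ) :
    ∫ t in Ioi c, Real.exp (-b * t) = Real.exp (-b * c) / b := by
  rw [integral_exp_mul_Ioi (neg_lt_zero.2 hb), neg_div_neg_eq]

theorem sub_mul_exp_neg_mul_le {α : ℝ} (hα : 0 < α) (x t : ℝ) :
    (t - x) * Real.exp (-α * t) ≤
      2 / α * Real.exp (-(α / 2) * x) * Real.exp (-(α / 2) * t) := by
  have h : t - x ≤ 2 / α * Real.exp (α / 2 * (t - x)) := by
    calc t - x = 2 / α * (α / 2 * (t - x)) := by field_simp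
      _ ≤ _ := by gcongr; linarith [Real.add_one_le_exp (α / 2 * (t - x))]
  calc (t - x) * Real.exp (-α * t)
      ≤ 2 / α * Real.exp (α / 2 * (t - x)) * Real.exp (-α * t) := by gcongr
    _ = _ := by rw [mul_assoc, mul_assoc, ← Real.exp_add, ← Real.exp_add]; ring_nf

section JostKernel

variable {μ : ℂ} {x t : ℝ}

noncomputable def jostKernel (μ : ℂ) (x t : ℝ) : ℂ :=
  (cexp (2 * μ * (x - t)) - 1) / (2 * μ)

theorem norm_cexp_two_mul_sub_le_one (hμ : 0 ≤ μ.re) (h : x ≤ t) :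
    ‖cexp (2 * μ * (x - t))‖ ≤ 1 := by
  rw [Complex.norm_exp, Real.exp_le_one_iff]
  have : (2 * μ * ((x : ℂ) - t)).re = 2 * μ.re * (x - t) := by simp
  rw [this]
  nlinarith

theorem norm_jostKernel_le_inv (hμ : 0 ≤ μ.re) (h : x ≤ t) :
    ‖jostKernel μ x t‖ ≤ ‖μ‖⁻¹ := by
  have hnum : ‖cexp (2 * μ * (x - t)) - 1‖ ≤ 2 :=
    (norm_sub_le _ _).trans (by linarith [norm_cexp_two_mul_sub_le_one hμ h, norm_one (α := ℂ)])
  calc ‖jostKernel μ x t‖ = ‖cexp (2 * μ * (x - t)) - 1‖ / (2 * ‖μ‖) := by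
        simp [jostKernel]
    _ ≤ 2 / (2 * ‖μ‖) := by gcongr
    _ = ‖μ‖⁻¹ := by rw [div_mul_eq_div_div, div_self two_ne_zero, one_div]

theorem hasDerivAt_jostKernel (hμ : μ ≠ 0) (x t : ℝ) :
    HasDerivAt (jostKernel μ x) (-cexp (2 * μ * (x - t))) t := by
  have h := (((hasDerivAt_id' (t : ℂ)).const_sub (x : ℂ)).const_mul (2 * μ)).cexp.sub_const 1
    |>.div_const (2 * μ) |>.comp_ofReal
  refine h.congr_deriv ?_
  field_simp

theorem norm_jostKernel_le_sub (hμ : 0 ≤ μ.re) (h : x ≤ t) :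
    ‖jostKernel μ x t‖ ≤ t - x := by
  rcases eq_or_ne μ 0 with rfl | hμ0
  · simpa [jostKernel] using h
  simpa [jostKernel, one_mul] using norm_image_sub_le_of_norm_deriv_le_segment' (C := 1)
    (fun s _ => (hasDerivAt_jostKernel hμ0 x s).hasDerivWithinAt)
    (fun s hs => by simpa using norm_cexp_two_mul_sub_le_one hμ hs.1) t ⟨h, le_rfl⟩

theorem continuous_jostKernel (μ : ℂ) (x : ℝ) : Continuous (jostKernel μ x) := by
  unfold jostKernel
  fun_prop

end JostKernel

section JostIntegral

variable {μ : ℂ} {g g₁ g₂ : ℝ → ℂ} {h : ℝ → ℝ} {x : ℝ}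

noncomputable def jostIntegral (μ : ℂ) (g : ℝ → ℂ) (x : ℝ) : ℂ :=
  ∫ t in Ioi x, jostKernel μ x t * g t

noncomputable def jostIntegralDeriv (μ : ℂ) (g : ℝ → ℂ) (x : ℝ) : ℂ :=
  ∫ t in Ioi x, cexp (2 * μ * (x - t)) * g t

theorem integrableOn_jostKernel_mul (hμ : 0 ≤ μ.re) (hgi : Integrable g) (x : ℝ) :
    IntegrableOn (fun t => jostKernel μ x t * g t) (Ioi x) :=
  hgi.integrableOn.bdd_mul (continuous_jostKernel μ x).aestronglyMeasurable
    ((ae_restrict_iff' measurableSet_Ioi).2 (ae_of_all _ fun _ ht =>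
      norm_jostKernel_le_inv hμ (le_of_lt ht)))

theorem integrableOn_cexp_two_mul_sub_mul (hμ : 0 ≤ μ.re) (hgi : Integrable g) (x a : ℝ) :
    IntegrableOn (fun t : ℝ => cexp (2 * μ * (x - t)) * g t) (Ioi a) := by
  refine hgi.integrableOn.bdd_mul (by fun_prop) ((ae_restrict_iff' measurableSet_Ioi).2
    (ae_of_all _ fun t ht => ?_)) (c := Real.exp (2 * μ.re * (x - a)))
  rw [Complex.norm_exp]
  gcongr
  · simp
    nlinarith [mem_Ioi.1 ht]

theorem jostIntegral_eq (hμ : 0 ≤ μ.re) (hgi : Integrable g) (x : ℝ) :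
    jostIntegral μ g x = (jostIntegralDeriv μ g x - ∫ t in Ioi x, g t) / (2 * μ) := by
  rw [jostIntegral, jostIntegralDeriv,
    ← integral_sub (integrableOn_cexp_two_mul_sub_mul hμ hgi x x) hgi.integrableOn,
    ← integral_div]
  exact setIntegral_congr_fun measurableSet_Ioi fun t _ => by simp only [jostKernel]; ring

theorem hasDerivAt_jostIntegralDeriv (hμ : 0 ≤ μ.re) (hg : Continuous g) (hgi : Integrable g)
    (x : ℝ) :
    HasDerivAt (jostIntegralDeriv μ g) (2 * μ * jostIntegralDeriv μ g x - g x) x := by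
  have hsplit : jostIntegralDeriv μ g =
      fun y : ℝ => cexp (2 * μ * y) * ∫ t in Ioi y, cexp (2 * μ * ((0 : ℝ) - t)) * g t := by
    funext y
    rw [jostIntegralDeriv, ← integral_const_mul]
    refine setIntegral_congr_fun measurableSet_Ioi fun t _ => ?_
    rw [← mul_assoc, ← Complex.exp_add]
    push_cast
    ring_nf
  have hB := hasDerivAt_integral_Ioi (by fun_prop) (integrableOn_cexp_two_mul_sub_mul hμ hgi 0
    (x - 1)) (sub_one_lt x)
  have hE : HasDerivAt (fun y : ℝ => cexp (2 * μ * y)) (cexp (2 * μ * x) * (2 * μ)) x := by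
    simpa using ((hasDerivAt_id (x : ℂ)).const_mul (2 * μ)).cexp.comp_ofReal
  simp only [hsplit]
  refine (hE.mul hB).congr_deriv ?_
  have : cexp (2 * μ * x) * cexp (2 * μ * ((0 : ℝ) - x)) = 1 := by
    rw [← Complex.exp_add]; push_cast; ring_nf; exact Complex.exp_zero
  linear_combination (- g x) * this

theorem hasDerivAt_jostIntegral (hμ : 0 < μ.re) (hg : Continuous g) (hgi : Integrable g)
    (x : ℝ) : HasDerivAt (jostIntegral μ g) (jostIntegralDeriv μ g x) x := by
  have hμ0 : μ ≠ 0 := fun h => by simp [h] at hμ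
  rw [show jostIntegral μ g = _ from funext (jostIntegral_eq hμ.le hgi)]
  refine ((hasDerivAt_jostIntegralDeriv hμ.le hg hgi x).sub
    (hasDerivAt_integral_Ioi hg hgi.integrableOn (sub_one_lt x))).div_const _ |>.congr_deriv ?_
  field_simp
  ring

theorem jostIntegral_sub (hμ : 0 ≤ μ.re) (hg₁ : Integrable g₁) (hg₂ : Integrable g₂)
    (x : ℝ) :
    jostIntegral μ g₁ x - jostIntegral μ g₂ x = jostIntegral μ (fun t => g₁ t - g₂ t) x := by
  rw [jostIntegral, jostIntegral, ← integral_sub (integrableOn_jostKernel_mul hμ hg₁ x)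
    (integrableOn_jostKernel_mul hμ hg₂ x)]
  simp_rw [jostIntegral, mul_sub]

theorem norm_jostIntegral_le_inv_mul (hμ : 0 ≤ μ.re) (hh : IntegrableOn h (Ioi x))
    (hgh : ∀ t > x, ‖g t‖ ≤ h t) :
    ‖jostIntegral μ g x‖ ≤ ‖μ‖⁻¹ * ∫ t in Ioi x, h t := by
  rw [← integral_const_mul]
  refine norm_integral_le_of_norm_le (hh.const_mul _)
    ((ae_restrict_iff' measurableSet_Ioi).2 (ae_of_all _ fun t ht => ?_))
  rw [norm_mul]
  exact mul_le_mul (norm_jostKernel_le_inv hμ (le_of_lt ht)) (hgh t ht) (norm_nonneg _)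
    (inv_nonneg.2 (norm_nonneg _))

theorem norm_jostIntegral_le_of_sub_mul_le (hμ : 0 ≤ μ.re) (hh : IntegrableOn h (Ioi x))
    (hgh : ∀ t > x, (t - x) * ‖g t‖ ≤ h t) :
    ‖jostIntegral μ g x‖ ≤ ∫ t in Ioi x, h t := by
  refine norm_integral_le_of_norm_le hh
    ((ae_restrict_iff' measurableSet_Ioi).2 (ae_of_all _ fun t ht => ?_))
  rw [norm_mul]
  exact (mul_le_mul_of_nonneg_right (norm_jostKernel_le_sub hμ (le_of_lt ht))
    (norm_nonneg _)).trans (hgh t ht)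

theorem norm_jostIntegralDeriv_le (hμ : 0 ≤ μ.re) (hh : IntegrableOn h (Ioi x))
    (hgh : ∀ t > x, ‖g t‖ ≤ h t) :
    ‖jostIntegralDeriv μ g x‖ ≤ ∫ t in Ioi x, h t := by
  refine norm_integral_le_of_norm_le hh
    ((ae_restrict_iff' measurableSet_Ioi).2 (ae_of_all _ fun t ht => ?_))
  rw [norm_mul]
  exact (mul_le_of_le_one_left (norm_nonneg _)
    (norm_cexp_two_mul_sub_le_one hμ (le_of_lt ht))).trans (hgh t ht)

end JostIntegral

section JostSolution

variable {α K : ℝ} {μ : ℂ} {ζ : ℝ → ℂ}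

theorem integrable_mul_one_add (hζi : Integrable ζ) (θ : ℝ →ᵇ ℂ) :
    Integrable fun t => ζ t * (1 + θ t) :=
  hζi.mul_bdd (c := 1 + ‖θ‖) (continuous_const.add θ.continuous).aestronglyMeasurable
    (ae_of_all _ fun t => (norm_add_le _ _).trans (by simpa using θ.norm_coe_le_norm t))

theorem exists_boundedContinuousFunction_eq_jostIntegral (hμ : 0 < μ.re) (hζ : Continuous ζ)
    (hζi : Integrable ζ) :
    ∃ θ : ℝ →ᵇ ℂ, ∀ x, θ x = jostIntegral μ (fun t => ζ t * (1 + θ t)) x := by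
  have hg (θ : ℝ →ᵇ ℂ) : Continuous fun t => ζ t * (1 + θ t) :=
    hζ.mul (continuous_const.add θ.continuous)
  let T (θ : ℝ →ᵇ ℂ) : ℝ →ᵇ ℂ :=
    .ofNormedAddCommGroup (jostIntegral μ fun t => ζ t * (1 + θ t))
    (continuous_iff_continuousAt.2 fun x =>
      (hasDerivAt_jostIntegral hμ (hg θ) (integrable_mul_one_add hζi θ) x).continuousAt)
    (‖μ‖⁻¹ * ∫ t, ‖ζ t * (1 + θ t)‖) fun x =>
      (norm_jostIntegral_le_inv_mul hμ.le (integrable_mul_one_add hζi θ).norm.integrableOn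
        fun t _ => le_rfl).trans <| mul_le_mul_of_nonneg_left
        (setIntegral_le_integral (integrable_mul_one_add hζi θ).norm
          (ae_of_all _ fun _ => norm_nonneg _)) (inv_nonneg.2 (norm_nonneg _))
  have hT (θ₁ θ₂ : ℝ →ᵇ ℂ) (x : ℝ) :
      dist (T θ₁ x) (T θ₂ x) ≤
        ∫ t in Ioi x, ‖μ‖⁻¹ * ‖ζ t‖ * dist (θ₁ t) (θ₂ t) := by
    rw [dist_eq_norm]
    change ‖jostIntegral μ _ x - jostIntegral μ _ x‖ ≤ _
    rw [jostIntegral_sub hμ.le (integrable_mul_one_add hζi θ₁)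
      (integrable_mul_one_add hζi θ₂)]
    simp_rw [mul_assoc, integral_const_mul]
    refine norm_jostIntegral_le_inv_mul hμ.le ?_ fun t _ => ?_
    · exact (hζi.norm.mul_bdd (c := dist θ₁ θ₂) (continuous_dist.comp
        (θ₁.continuous.prodMk θ₂.continuous)).aestronglyMeasurable
        (ae_of_all _ fun t => by simpa using θ₁.dist_coe_le_dist t)).integrableOn
    · rw [dist_eq_norm, ← norm_mul]
      exact le_of_eq (by ring_nf)
  obtain ⟨θ, hθ⟩ := exists_isFixedPt_of_dist_le_integral_Ioi (by fun_prop)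
    (fun t => by positivity) (hζi.norm.const_mul _) hT
  exact ⟨θ, fun x => (DFunLike.congr_fun hθ x).symm⟩

theorem one_add_norm_le_exp_of_eq_jostIntegral (hα : 0 < α) (hK : 0 ≤ K) (hμ : 0 ≤ μ.re)
    (hζK : ∀ t > 0, ‖ζ t‖ ≤ K * Real.exp (-α * t)) {θ : ℝ →ᵇ ℂ}
    (hθ : ∀ x, θ x = jostIntegral μ (fun t => ζ t * (1 + θ t)) x) {x : ℝ} (hx : 0 < x) :
    1 + ‖θ x‖ ≤ Real.exp (4 * K / α ^ 2) := by
  set w := fun t => 2 * K / α * Real.exp (-(α / 2) * t)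
  have hwi : IntegrableOn w (Ioi 0) := (exp_neg_integrableOn_Ioi 0 (half_pos hα)).const_mul _
  have hwui : IntegrableOn (fun t => w t * (1 + ‖θ t‖)) (Ioi 0) :=
    hwi.mul_bdd (c := 1 + ‖θ‖) (by fun_prop) (ae_of_all _ fun t => by
      rw [Real.norm_of_nonneg (by positivity)]
      linarith [θ.norm_coe_le_norm t])
  have hgronwall (y : ℝ) (hy : 0 < y) : ‖θ y‖ ≤ ∫ t in Ioi y, w t * (1 + ‖θ t‖) := by
    rw [hθ y]
    refine norm_jostIntegral_le_of_sub_mul_le hμ (hwui.mono_set (Ioi_subset_Ioi hy.le))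
      fun t ht => ?_
    have ht0 : 0 < t := hy.trans ht
    have hζt : (t - y) * ‖ζ t‖ ≤ w t := calc
      (t - y) * ‖ζ t‖ ≤ K * ((t - 0) * Real.exp (-α * t)) := by
        rw [mul_left_comm]
        exact mul_le_mul (by linarith) (hζK t ht0) (norm_nonneg _) (by linarith)
      _ ≤ K * (2 / α * Real.exp (-(α / 2) * 0) * Real.exp (-(α / 2) * t)) :=
        mul_le_mul_of_nonneg_left (sub_mul_exp_neg_mul_le hα 0 t) hK
      _ = w t := by simp only [w, mul_zero, Real.exp_zero]; ring
    rw [norm_mul, ← mul_assoc]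
    exact mul_le_mul hζt ((norm_add_le _ _).trans (by rw [norm_one])) (norm_nonneg _)
      (by positivity)
  refine (one_add_le_exp_integral_Ioi (u := fun t => ‖θ t‖) θ.continuous.norm (by fun_prop)
    (fun t _ => by positivity) hwi hwui hgronwall hx).trans (Real.exp_le_exp.2 ?_)
  rw [integral_const_mul, integral_exp_neg_mul_Ioi (half_pos hα)]
  calc 2 * K / α * (Real.exp (-(α / 2) * x) / (α / 2)) ≤ 2 * K / α * (1 / (α / 2)) := by
        gcongr
        exact Real.exp_le_one_iff.2 (by nlinarith)
    _ = 4 * K / α ^ 2 := by field_simp; ring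

theorem exists_jost_perturbation (hα : 0 < α) (hK : 0 ≤ K) (hμ : 0 < μ.re)
    (hζ : Continuous ζ) (hζi : Integrable ζ)
    (hζK : ∀ t > 0, ‖ζ t‖ ≤ K * Real.exp (-α * t)) :
    ∃ θ θ' : ℝ → ℂ, (∀ x, HasDerivAt θ (θ' x) x) ∧
      (∀ x, HasDerivAt θ' (2 * μ * θ' x - ζ x * (1 + θ x)) x) ∧
      ∀ x > 0,
        ‖θ x‖ ≤ Real.exp (4 * K / α ^ 2) * (4 * K / α ^ 2) * Real.exp (-α * x) ∧
        ‖θ' x‖ ≤ Real.exp (4 * K / α ^ 2) * (K / α) * Real.exp (-α * x) := by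
  obtain ⟨θ, hθ⟩ := exists_boundedContinuousFunction_eq_jostIntegral hμ hζ hζi
  set g := fun t => ζ t * (1 + θ t)
  set U := Real.exp (4 * K / α ^ 2)
  have hgc : Continuous g := hζ.mul (continuous_const.add θ.continuous)
  have hgi : Integrable g := integrable_mul_one_add hζi θ
  have hg : ∀ t > 0, ‖g t‖ ≤ U * K * Real.exp (-α * t) := fun t ht => by
    rw [norm_mul, mul_comm U, mul_right_comm]
    gcongr
    · exact hζK t ht
    · exact (norm_add_le _ _).trans (by
        simpa using one_add_norm_le_exp_of_eq_jostIntegral hα hK hμ.le hζK hθ ht)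
  refine ⟨θ, jostIntegralDeriv μ g, fun x => ?_, hasDerivAt_jostIntegralDeriv hμ.le hgc hgi,
    fun x hx => ⟨?_, ?_⟩⟩
  · exact (hasDerivAt_jostIntegral hμ hgc hgi x).congr_of_eventuallyEq (.of_forall hθ)
  · rw [hθ x]
    refine (norm_jostIntegral_le_of_sub_mul_le hμ.le
      (h := fun t => 2 * K * U / α * Real.exp (-(α / 2) * x) * Real.exp (-(α / 2) * t))
      ((exp_neg_integrableOn_Ioi x (half_pos hα)).const_mul _) fun t ht => ?_).trans_eq ?_
    · calc (t - x) * ‖g t‖ ≤ U * K * ((t - x) * Real.exp (-α * t)) := by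
            rw [mul_left_comm]
            exact mul_le_mul_of_nonneg_left (hg t (hx.trans ht)) (by linarith)
        _ ≤ U * K * (2 / α * Real.exp (-(α / 2) * x) * Real.exp (-(α / 2) * t)) :=
            mul_le_mul_of_nonneg_left (sub_mul_exp_neg_mul_le hα x t) (by positivity)
        _ = _ := by ring
    · rw [integral_const_mul, integral_exp_neg_mul_Ioi (half_pos hα), mul_assoc, mul_div_assoc',
        ← Real.exp_add]
      field_simp
      ring_nf
  · refine (norm_jostIntegralDeriv_le hμ.le (h := fun t => U * K * Real.exp (-α * t))
      ((exp_neg_integrableOn_Ioi x hα).const_mul _) fun t ht => hg t (hx.trans ht)).trans_eq ?_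
    rw [integral_const_mul, integral_exp_neg_mul_Ioi hα]
    ring

theorem exists_jost_solution (hα : 0 < α) (hK : 0 ≤ K) (hμ : 0 < μ.re) (hζ : Continuous ζ)
    (hζi : Integrable ζ) (hζK : ∀ t > 0, ‖ζ t‖ ≤ K * Real.exp (-α * t)) {M : ℝ}
    (hμM : ‖μ‖ ≤ M) :
    ∃ φ θ₁ θ₂ : ℝ → ℂ, ContDiff ℝ 2 φ ∧
      (∀ x, deriv (deriv φ) x + ζ x * φ x = μ ^ 2 * φ x) ∧
      (∀ x, φ x = cexp (-μ * x) * (1 + θ₁ x)) ∧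
      (∀ x, deriv φ x = cexp (-μ * x) * (-μ + θ₂ x)) ∧
      ∀ x > 0,
        ‖θ₁ x‖ ≤ Real.exp (4 * K / α ^ 2) * ((1 + M) * (4 * K / α ^ 2) + K / α) *
          Real.exp (-α * x) ∧
        ‖θ₂ x‖ ≤ Real.exp (4 * K / α ^ 2) * ((1 + M) * (4 * K / α ^ 2) + K / α) *
          Real.exp (-α * x) := by
  obtain ⟨θ, θ', hθ, hθ', hbd⟩ := exists_jost_perturbation hα hK hμ hζ hζi hζK
  set φ := fun x : ℝ => cexp (-μ * x) * (1 + θ x)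
  set φ' := fun x : ℝ => cexp (-μ * x) * (θ' x - μ * (1 + θ x))
  have hφ (x : ℝ) : HasDerivAt φ (φ' x) x :=
    hasDerivAt_cexp_neg_mul_mul μ ((hθ x).const_add 1)
  have hφ' (x : ℝ) : HasDerivAt φ' (cexp (-μ * x) * ((μ ^ 2 - ζ x) * (1 + θ x))) x :=
    (hasDerivAt_cexp_neg_mul_mul μ ((hθ' x).sub (((hθ x).const_add 1).const_mul μ))).congr_deriv
      (by simp only [Pi.sub_apply]; ring)
  have hθc : Continuous θ := continuous_iff_continuousAt.2 fun x => (hθ x).continuousAt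
  refine ⟨φ, θ, fun x => θ' x - μ * θ x, contDiff_two_of_hasDerivAt hφ hφ' (by fun_prop),
    fun x => ?_, fun x => rfl, fun x => ?_, fun x hx => ?_⟩
  · rw [funext fun y => (hφ y).deriv, (hφ' x).deriv]
    ring
  · rw [(hφ x).deriv]
    ring
  obtain ⟨h₁, h₂⟩ := hbd x hx
  have hA : 0 ≤ 4 * K / α ^ 2 := by positivity
  have hM : 0 ≤ M := (norm_nonneg μ).trans hμM
  have hC {c : ℝ} (hc : c ≤ (1 + M) * (4 * K / α ^ 2) + K / α) :
      Real.exp (4 * K / α ^ 2) * c * Real.exp (-α * x) ≤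
        Real.exp (4 * K / α ^ 2) * ((1 + M) * (4 * K / α ^ 2) + K / α) * Real.exp (-α * x) := by
    gcongr
  refine ⟨h₁.trans (hC (by nlinarith [div_nonneg hK hα.le])), ?_⟩
  calc ‖θ' x - μ * θ x‖ ≤ ‖θ' x‖ + M * ‖θ x‖ := (norm_sub_le _ _).trans (by
        rw [norm_mul]; gcongr)
    _ ≤ _ := by nlinarith [hC (c := K / α + M * (4 * K / α ^ 2)) (by nlinarith)]

end JostSolution

theorem exists_continuous_integrable_extension {α K : ℝ} {f : ℝ → ℝ} (hα : 0 < α)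
    (hK : 0 ≤ K) (hf : ContinuousOn f (Ici 1))
    (hfK : ∀ x ≥ 1, |f x| ≤ K * Real.exp (-α * x)) :
    ∃ ζ : ℝ → ℂ, Continuous ζ ∧ Integrable ζ ∧ (∀ x ≥ 1, ζ x = f x) ∧
      ∀ t > 0, ‖ζ t‖ ≤ K * Real.exp (-α * t) := by
  set ζ := fun t : ℝ => ((f (max t 1) * max 0 (min t 1) : ℝ) : ℂ)
  have hζK (t : ℝ) : ‖ζ t‖ ≤ (Ioi 0).indicator (fun t => K * Real.exp (-α * t)) t := by
    rcases le_or_gt t 0 with ht | ht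
    · simp [ζ, ht, min_eq_left (ht.trans zero_le_one)]
    rw [indicator_of_mem (mem_Ioi.2 ht)]
    rcases le_or_gt 1 t with h1 | h1
    · simpa [ζ, h1] using hfK t h1
    calc ‖ζ t‖ = |f 1| * t := by simp [ζ, h1.le, ht.le, abs_of_pos ht]
      _ ≤ K * Real.exp (-α * 1) := by nlinarith [hfK 1 le_rfl, abs_nonneg (f 1)]
      _ ≤ K * Real.exp (-α * t) :=
        mul_le_mul_of_nonneg_left (Real.exp_le_exp.2 (by nlinarith)) hK
  have hζ : Continuous ζ := Complex.continuous_ofReal.comp ((hf.comp_continuous (by fun_prop)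
    fun t => le_max_right t 1).mul (by fun_prop))
  refine ⟨ζ, hζ, ?_, fun x hx => ?_, fun t ht => by simpa [ht] using hζK t⟩
  · exact ((integrable_indicator_iff measurableSet_Ioi).2
      ((exp_neg_integrableOn_Ioi 0 hα).const_mul K)).mono' hζ.aestronglyMeasurable
      (ae_of_all _ hζK)
  · simp [ζ, max_eq_left hx, min_eq_right hx]

theorem re_csqrt_pos {z : ℂ} (hz : z ∉ negRealAxis) : 0 < (csqrt z).re := by
  rw [csqrt, one_div, Complex.cpow_inv_two_re, Real.sqrt_pos]
  by_contra! hle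
  have hre := Complex.abs_re_le_norm z
  have hre0 : z.re ≤ 0 := by linarith [norm_nonneg z]
  exact hz ⟨Complex.abs_re_eq_norm.1 (by rw [abs_of_nonpos hre0] at hre ⊢; linarith), hre0⟩

theorem csqrt_sq (z : ℂ) : csqrt z ^ 2 = z := by
  rw [csqrt, one_div]
  exact Complex.cpow_ofNat_inv_pow z 2

theorem norm_csqrt (z : ℂ) : ‖csqrt z‖ = √‖z‖ := by
  have h := Complex.norm_cpow_inv_nat z 2
  push_cast at h
  rw [csqrt, one_div, h, Real.sqrt_eq_rpow, one_div]

theorem decaying_solution_at_plus_infinity_general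
    (α K Ms : ℝ) (hα : 0 < α) (hK : 0 < K)
    (ζ₀ : ℝ → ℝ) (hζcont : ContinuousOn ζ₀ (Set.Ici 1))
    (hζbd : ∀ x ≥ (1:ℝ), |ζ₀ x| ≤ K * Real.exp (-α * x)) :
    ∃ C > 0, ∀ lam : ℂ, lam ∉ negRealAxis → ‖lam‖ ≤ Ms →
      ∃ φ θ₁ θ₂ : ℝ → ℂ,
        ContDiff ℝ 2 φ ∧
        (∀ x ≥ (1:ℝ), deriv (deriv φ) x + (ζ₀ x : ℂ) * φ x = lam * φ x) ∧
        (∀ x ≥ (1:ℝ), φ x = Complex.exp (-(csqrt lam) * (x : ℂ)) * (1 + θ₁ x)) ∧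
        (∀ x ≥ (1:ℝ), deriv φ x = Complex.exp (-(csqrt lam) * (x : ℂ)) * (-(csqrt lam) + θ₂ x)) ∧
        (∀ x ≥ (1:ℝ), ‖θ₁ x‖ ≤ C * Real.exp (-α * x) ∧ ‖θ₂ x‖ ≤ C * Real.exp (-α * x)) := by
  obtain ⟨ζ, hζ, hζi, hζeq, hζK⟩ :=
    exists_continuous_integrable_extension hα hK.le hζcont hζbd
  refine ⟨Real.exp (4 * K / α ^ 2) * ((1 + √Ms) * (4 * K / α ^ 2) + K / α), by positivity,
    fun lam hlam hlamMs => ?_⟩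
  obtain ⟨φ, θ₁, θ₂, hφ, hode, hφeq, hφ'eq, hbd⟩ :=
    exists_jost_solution hα hK.le (re_csqrt_pos hlam) hζ hζi hζK
      (norm_csqrt lam ▸ Real.sqrt_le_sqrt hlamMs)
  refine ⟨φ, θ₁, θ₂, hφ, fun x hx => ?_, fun x _ => hφeq x, fun x _ => hφ'eq x,
    fun x hx => hbd x (by linarith)⟩
  rw [← hζeq x hx, hode x, csqrt_sq]

/-- Construction of the decaying solution `φ⁺(x) = e^{-√λ x}(1 + θ₁)` on `[1,∞)`,
with remainders of size `O(e^{-α x})` uniformly in `|λ| ≤ M_s`. -/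
theorem decaying_solution_at_plus_infinity
    (α K Ms : ℝ) (hα : 0 < α) (hK : 0 < K) (hMs : 0 < Ms)
    (ζ₀ : ℝ → ℝ) (hζcont : ContinuousOn ζ₀ (Set.Ici 1))
    (hζbd : ∀ x ≥ (1:ℝ), |ζ₀ x| ≤ K * Real.exp (-α * x)) :
    ∃ C > 0, ∀ lam : ℂ, lam ∉ negRealAxis → ‖lam‖ ≤ Ms →
      ∃ φ θ₁ θ₂ : ℝ → ℂ,
        ContDiff ℝ 2 φ ∧
        (∀ x ≥ (1:ℝ), deriv (deriv φ) x + (ζ₀ x : ℂ) * φ x = lam * φ x) ∧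
        (∀ x ≥ (1:ℝ), φ x = Complex.exp (-(csqrt lam) * (x : ℂ)) * (1 + θ₁ x)) ∧
        (∀ x ≥ (1:ℝ), deriv φ x = Complex.exp (-(csqrt lam) * (x : ℂ)) * (-(csqrt lam) + θ₂ x)) ∧
        (∀ x ≥ (1:ℝ), ‖θ₁ x‖ ≤ C * Real.exp (-α * x) ∧ ‖θ₂ x‖ ≤ C * Real.exp (-α * x)) :=
  decaying_solution_at_plus_infinity_general α K Ms hα hK ζ₀ hζcont hζbd
end

section
/- Let α > 0, K > 0, x₀ ∈ ℝ, and let Θ₀ : [x₀,∞) → ℝ be continuous with |Θ₀(y)| ≤ K e^{−α y} for all y ≥ x₀. Let μ ∈ ℂ with 0 ≤ Re μ and 2 Re μ < α. Then for every x ≥ x₀ all integrals below converge absolutely and ∫_x^∞ ( e^{−2μ(x−y)} − e^{2μ(x−y)} ) Θ₀(y) dy = 2μ ∫_x^∞ ( e^{−2μ(x−y)} + e^{2μ(x−y)} ) ( ∫_y^∞ Θ₀(τ) dτ ) dy; moreover |∫_x^∞ ( e^{−2μ(x−y)} + e^{2μ(x−y)} ) ( ∫_y^∞ Θ₀(τ)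 dτ ) dy| ≤ C e^{−α x} for all x ≥ max(x₀, 0), where C depends only on K, α and Re μ. -/
/-!
With `S(y) = e^{-2μ(x-y)} - e^{2μ(x-y)}` and `T(y) = ∫_y^∞ Θ₀`, one has
`S' = 2μ (e^{-2μ(x-y)} + e^{2μ(x-y)})` and `T' = -Θ₀`, so the identity is integration by parts
on `(x, ∞)`. The boundary term vanishes at `x` because `S(x) = 0`, and at `∞` because
`|S(y)| ≤ 2 e^{2 Re μ (y-x)}` while `|T(y)| ≤ (K/α) e^{-αy}` and `2 Re μ < α`. The same two bounds
give the integrability and the estimate with `C = 2K / (α (α - 2 Re μ))`.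
-/

open MeasureTheory Set Filter Topology Real

section ExpWeight

theorem exp_mul_sub_mul_exp_neg_mul (c α a y : ℝ) :
    exp (c * (y - a)) * exp (-α * y) = exp (-c * a) * exp ((c - α) * y) := by
  rw [← exp_add, ← exp_add]; ring_nf

variable {c α : ℝ}

theorem integrableOn_Ioi_exp_mul_sub_mul_exp_neg_mul (hc : c < α) (a : ℝ) :
    IntegrableOn (fun y => exp (c * (y - a)) * exp (-α * y)) (Ioi a) := by
  simp_rw [exp_mul_sub_mul_exp_neg_mul]
  exact (integrableOn_exp_mul_Ioi (by linarith) a).const_mul _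

theorem integral_Ioi_exp_mul_sub_mul_exp_neg_mul (hc : c < α) (a : ℝ) :
    ∫ y in Ioi a, exp (c * (y - a)) * exp (-α * y) = exp (-α * a) / (α - c) := by
  simp_rw [exp_mul_sub_mul_exp_neg_mul]
  rw [integral_const_mul, integral_exp_mul_Ioi (by linarith), mul_div_assoc', mul_neg, ← exp_add,
    neg_div, ← div_neg, neg_sub]
  ring_nf

theorem tendsto_exp_mul_sub_mul_exp_neg_mul_atTop (hc : c < α) (a : ℝ) :
    Tendsto (fun y => exp (c * (y - a)) * exp (-α * y)) atTop (𝓝 0) := by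
  simp_rw [exp_mul_sub_mul_exp_neg_mul]
  simpa using (tendsto_exp_atBot.comp
    (tendsto_id.const_mul_atTop_of_neg (sub_neg.2 hc))).const_mul (exp (-c * a))

variable {E : Type*} [NormedAddCommGroup E] {g : ℝ → E} {a C : ℝ}

theorem integrableOn_Ioi_of_norm_le_exp_mul_sub_mul_exp_neg_mul (hc : c < α)
    (hg : AEStronglyMeasurable g (volume.restrict (Ioi a)))
    (hbd : ∀ y ∈ Ioi a, ‖g y‖ ≤ C * (exp (c * (y - a)) * exp (-α * y))) :
    IntegrableOn g (Ioi a) :=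
  Integrable.mono' ((integrableOn_Ioi_exp_mul_sub_mul_exp_neg_mul hc a).const_mul C) hg
    (ae_restrict_of_forall_mem measurableSet_Ioi hbd)

theorem norm_integral_Ioi_le_of_norm_le_exp_mul_sub_mul_exp_neg_mul [NormedSpace ℝ E]
    (hc : c < α) (hbd : ∀ y ∈ Ioi a, ‖g y‖ ≤ C * (exp (c * (y - a)) * exp (-α * y))) :
    ‖∫ y in Ioi a, g y‖ ≤ C / (α - c) * exp (-α * a) := by
  refine (norm_integral_le_of_norm_le
    ((integrableOn_Ioi_exp_mul_sub_mul_exp_neg_mul hc a).const_mul C)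
    (ae_restrict_of_forall_mem measurableSet_Ioi hbd)).trans_eq ?_
  rw [integral_const_mul, integral_Ioi_exp_mul_sub_mul_exp_neg_mul hc]
  ring

end ExpWeight

theorem hasDerivAt_integral_Ici {E : Type*} [NormedAddCommGroup E] [NormedSpace ℝ E]
    [CompleteSpace E] {f : ℝ → E} {a y : ℝ} (hf : IntegrableOn f (Ioi a))
    (hmeas : StronglyMeasurableAtFilter f (𝓝 y)) (hcont : ContinuousAt f y) (hy : a < y) :
    HasDerivAt (fun b => ∫ x in Ici b, f x) (-f y) y := by
  have hsplit : (fun b => ∫ x in Ici b, f x) =ᶠ[𝓝 y]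
      fun b => (∫ x in Ioi a, f x) - ∫ x in a..b, f x := by
    filter_upwards [Ioi_mem_nhds hy] with b hb
    rw [integral_Ici_eq_integral_Ioi, ← intervalIntegral.integral_Ioi_sub_Ioi hf hb.le,
      sub_sub_cancel]
  have hint : IntervalIntegrable f volume a y :=
    (intervalIntegrable_iff_integrableOn_Ioc_of_le hy.le).2 (hf.mono_set Ioc_subset_Ioi_self)
  exact ((intervalIntegral.integral_hasDerivAt_right hint hmeas hcont).const_sub _)
    |>.congr_of_eventuallyEq hsplit

section Kernel

/-- `sinhKernel μ x y = 2 sinh (2μ(y - x))` and `coshKernel μ x y = 2 cosh (2μ(y - x))`. -/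
noncomputable def sinhKernel (μ : ℂ) (x y : ℝ) : ℂ :=
  Complex.exp (-2*μ*((x:ℂ) - (y:ℂ))) - Complex.exp (2*μ*((x:ℂ) - (y:ℂ)))

noncomputable def coshKernel (μ : ℂ) (x y : ℝ) : ℂ :=
  Complex.exp (-2*μ*((x:ℂ) - (y:ℂ))) + Complex.exp (2*μ*((x:ℂ) - (y:ℂ)))

variable {μ : ℂ} {x y : ℝ}

theorem sinhKernel_self : sinhKernel μ x x = 0 := by
  simp [sinhKernel]

theorem continuous_sinhKernel : Continuous (sinhKernel μ x) := by
  unfold sinhKernel; fun_prop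

theorem continuous_coshKernel : Continuous (coshKernel μ x) := by
  unfold coshKernel; fun_prop

theorem hasDerivAt_sinhKernel : HasDerivAt (sinhKernel μ x) (2 * μ * coshKernel μ x y) y := by
  have hlin : ∀ c : ℂ, HasDerivAt (fun y : ℝ => c * ((x:ℂ) - (y:ℂ))) (-c) y := fun c => by
    simpa using ((hasDerivAt_id y).ofReal_comp.const_sub (x:ℂ)).const_mul c
  exact ((hlin (-2*μ)).cexp.sub (hlin (2*μ)).cexp).congr_deriv (by rw [coshKernel]; ring)

theorem norm_exp_add_norm_exp_le (hμ : 0 ≤ μ.re) (hxy : x ≤ y) :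
    ‖Complex.exp (-2*μ*((x:ℂ) - (y:ℂ)))‖ + ‖Complex.exp (2*μ*((x:ℂ) - (y:ℂ)))‖
      ≤ 2 * exp (2 * μ.re * (y - x)) := by
  have hre : ∀ c : ℂ, (c * ((x:ℂ) - (y:ℂ))).re = c.re * (x - y) := fun c => by
    rw [← Complex.ofReal_sub, Complex.mul_re]; simp
  have hneg : (-2 * μ).re * (x - y) = 2 * μ.re * (y - x) := by simp; ring
  have hpos : (2 * μ).re * (x - y) ≤ 2 * μ.re * (y - x) := by simp; nlinarith
  rw [Complex.norm_exp, Complex.norm_exp, hre, hre, hneg]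
  linarith [exp_le_exp.2 hpos]

theorem norm_sinhKernel_le (hμ : 0 ≤ μ.re) (hxy : x ≤ y) :
    ‖sinhKernel μ x y‖ ≤ 2 * exp (2 * μ.re * (y - x)) :=
  (norm_sub_le _ _).trans (norm_exp_add_norm_exp_le hμ hxy)

theorem norm_coshKernel_le (hμ : 0 ≤ μ.re) (hxy : x ≤ y) :
    ‖coshKernel μ x y‖ ≤ 2 * exp (2 * μ.re * (y - x)) :=
  (norm_add_le _ _).trans (norm_exp_add_norm_exp_le hμ hxy)

end Kernel

section Tail

variable {E : Type*} [NormedAddCommGroup E] {f : ℝ → E} {K α a : ℝ}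

theorem integrableOn_Ici_of_norm_le_exp (hα : 0 < α) (hf : ContinuousOn f (Ici a))
    (hbd : ∀ y ≥ a, ‖f y‖ ≤ K * exp (-α * y)) : IntegrableOn f (Ici a) := by
  rw [integrableOn_Ici_iff_integrableOn_Ioi]
  refine integrableOn_Ioi_of_norm_le_exp_mul_sub_mul_exp_neg_mul (c := 0) (C := K) hα
    ((hf.mono Ioi_subset_Ici_self).aestronglyMeasurable measurableSet_Ioi) fun y hy => ?_
  simpa using hbd y hy.le

theorem norm_integral_Ici_le_of_norm_le_exp [NormedSpace ℝ E] (hα : 0 < α)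
    (hbd : ∀ y ≥ a, ‖f y‖ ≤ K * exp (-α * y)) : ‖∫ y in Ici a, f y‖ ≤ K / α * exp (-α * a) := by
  rw [integral_Ici_eq_integral_Ioi]
  simpa using norm_integral_Ioi_le_of_norm_le_exp_mul_sub_mul_exp_neg_mul (c := 0) hα
    (g := f) (C := K) fun y hy => by simpa using hbd y hy.le

end Tail

section IntegrationByParts

variable {f : ℝ → ℂ} {K α a : ℝ} {μ : ℂ}

theorem norm_mul_integral_Ici_le (hα : 0 < α) (hbd : ∀ y ≥ a, ‖f y‖ ≤ K * exp (-α * y))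
    {k : ℂ} {c y : ℝ} (hy : a ≤ y) (hk : ‖k‖ ≤ 2 * exp (c * (y - a))) :
    ‖k * ∫ τ in Ici y, f τ‖ ≤ 2 * K / α * (exp (c * (y - a)) * exp (-α * y)) := by
  have htail := norm_integral_Ici_le_of_norm_le_exp hα fun τ (hτ : y ≤ τ) => hbd τ (hy.trans hτ)
  rw [norm_mul]
  calc ‖k‖ * ‖∫ τ in Ici y, f τ‖ ≤ 2 * exp (c * (y - a)) * (K / α * exp (-α * y)) :=
        mul_le_mul hk htail (norm_nonneg _) (by positivity)
    _ = _ := by ring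

theorem integrableOn_sinhKernel_mul (hf : ContinuousOn f (Ici a))
    (hbd : ∀ y ≥ a, ‖f y‖ ≤ K * exp (-α * y)) (hμ : 0 ≤ μ.re) (hμα : 2 * μ.re < α) :
    IntegrableOn (fun y => sinhKernel μ a y * f y) (Ioi a) := by
  refine integrableOn_Ioi_of_norm_le_exp_mul_sub_mul_exp_neg_mul hμα
    ((continuous_sinhKernel.continuousOn.mul (hf.mono Ioi_subset_Ici_self)).aestronglyMeasurable
      measurableSet_Ioi) (C := 2 * K) fun y (hy : a < y) => ?_
  rw [norm_mul]
  calc ‖sinhKernel μ a y‖ * ‖f y‖ ≤ 2 * exp (2 * μ.re * (y - a)) * (K * exp (-α * y)) :=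
        mul_le_mul (norm_sinhKernel_le hμ hy.le) (hbd y hy.le) (norm_nonneg _) (by positivity)
    _ = _ := by ring

theorem integrableOn_coshKernel_mul_integral_Ici (hα : 0 < α) (hf : ContinuousOn f (Ici a))
    (hbd : ∀ y ≥ a, ‖f y‖ ≤ K * exp (-α * y)) (hμ : 0 ≤ μ.re) (hμα : 2 * μ.re < α) :
    IntegrableOn (fun y => coshKernel μ a y * ∫ τ in Ici y, f τ) (Ioi a) := by
  have htail := (integrableOn_Ici_of_norm_le_exp hα hf hbd).continuousOn_Ici_primitive_Ici
  exact integrableOn_Ioi_of_norm_le_exp_mul_sub_mul_exp_neg_mul hμα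
    ((continuous_coshKernel.continuousOn.mul (htail.mono Ioi_subset_Ici_self)).aestronglyMeasurable
      measurableSet_Ioi)
    fun y (hy : a < y) => norm_mul_integral_Ici_le hα hbd hy.le (norm_coshKernel_le hμ hy.le)

theorem norm_integral_coshKernel_mul_integral_Ici_le (hα : 0 < α)
    (hbd : ∀ y ≥ a, ‖f y‖ ≤ K * exp (-α * y)) (hμ : 0 ≤ μ.re) (hμα : 2 * μ.re < α) :
    ‖∫ y in Ioi a, coshKernel μ a y * ∫ τ in Ici y, f τ‖
      ≤ 2 * K / α / (α - 2 * μ.re) * exp (-α * a) :=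
  norm_integral_Ioi_le_of_norm_le_exp_mul_sub_mul_exp_neg_mul hμα
    fun y (hy : a < y) => norm_mul_integral_Ici_le hα hbd hy.le (norm_coshKernel_le hμ hy.le)

theorem tendsto_sinhKernel_mul_integral_Ici_atTop (hα : 0 < α)
    (hbd : ∀ y ≥ a, ‖f y‖ ≤ K * exp (-α * y)) (hμ : 0 ≤ μ.re) (hμα : 2 * μ.re < α) :
    Tendsto (fun y => sinhKernel μ a y * ∫ τ in Ici y, f τ) atTop (𝓝 0) := by
  refine squeeze_zero_norm' ?_
    (by simpa only [mul_zero] using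
      (tendsto_exp_mul_sub_mul_exp_neg_mul_atTop hμα a).const_mul (2 * K / α))
  filter_upwards [eventually_ge_atTop a] with y hy
  exact norm_mul_integral_Ici_le hα hbd hy (norm_sinhKernel_le hμ hy)

theorem integral_sinhKernel_mul_eq (hα : 0 < α) (hf : ContinuousOn f (Ici a))
    (hbd : ∀ y ≥ a, ‖f y‖ ≤ K * exp (-α * y)) (hμ : 0 ≤ μ.re) (hμα : 2 * μ.re < α) :
    ∫ y in Ioi a, sinhKernel μ a y * f y
      = 2 * μ * ∫ y in Ioi a, coshKernel μ a y * ∫ τ in Ici y, f τ := by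
  have hint := integrableOn_Ici_of_norm_le_exp hα hf hbd
  have htail := hint.continuousOn_Ici_primitive_Ici
  have hderiv : ∀ y ∈ Ioi a, HasDerivAt (fun b => ∫ τ in Ici b, f τ) (-f y) y := fun y hy =>
    hasDerivAt_integral_Ici (hint.mono_set Ioi_subset_Ici_self)
      ((hf.mono Ioi_subset_Ici_self).stronglyMeasurableAtFilter isOpen_Ioi y hy)
      (hf.continuousAt (Ici_mem_nhds hy)) hy
  have hzero : Tendsto (fun y => sinhKernel μ a y * ∫ τ in Ici y, f τ) (𝓝[>] a) (𝓝 0) := by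
    have := ((continuous_sinhKernel (μ := μ) (x := a)).continuousOn.mul htail).continuousWithinAt
      self_mem_Ici
    simpa [sinhKernel_self, Pi.mul_def] using this.mono_left (nhdsWithin_mono a Ioi_subset_Ici_self)
  have hibp := integral_Ioi_mul_deriv_eq_deriv_mul (fun y _ => hasDerivAt_sinhKernel) hderiv
    ((integrableOn_sinhKernel_mul hf hbd hμ hμα).neg.congr_fun
      (fun y _ => (mul_neg _ _).symm) measurableSet_Ioi)
    (IntegrableOn.congr_fun ((integrableOn_coshKernel_mul_integral_Ici hα hf hbd hμ hμα).const_mul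
      (2 * μ)) (fun y _ => (mul_assoc _ _ _).symm) measurableSet_Ioi) hzero
    (tendsto_sinhKernel_mul_integral_Ici_atTop hα hbd hμ hμα)
  simp only [mul_neg, integral_neg, mul_assoc, integral_const_mul] at hibp
  linear_combination -hibp

end IntegrationByParts

/-- Integration-by-parts identity producing the factor `2μ` (i.e. `√λ`) in the
difference `κ₁⁺ − θ₁⁺`:
`∫_x^∞ (e^{−2μ(x−y)} − e^{2μ(x−y)}) Θ₀(y) dy
  = 2μ ∫_x^∞ (e^{−2μ(x−y)} + e^{2μ(x−y)}) (∫_y^∞ Θ₀) dy`,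
with the last integral `O(e^{-α x})` for `x ≥ max(x₀, 0)`. -/
theorem integration_by_parts_sqrt_factor
    (α K x₀ : ℝ) (hα : 0 < α) (hK : 0 < K)
    (Θ₀ : ℝ → ℝ) (hΘcont : ContinuousOn Θ₀ (Set.Ici x₀))
    (hΘbd : ∀ y ≥ x₀, |Θ₀ y| ≤ K * Real.exp (-α * y))
    (μ : ℂ) (hμre : 0 ≤ μ.re) (hμre' : 2 * μ.re < α) :
    ∃ C > 0,
      (∀ x ≥ x₀,
        (∀ y ≥ x₀, IntegrableOn (fun τ : ℝ => (Θ₀ τ : ℂ)) (Set.Ici y)) ∧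
        IntegrableOn
          (fun y : ℝ =>
            (Complex.exp (-2*μ*((x:ℂ) - (y:ℂ))) - Complex.exp (2*μ*((x:ℂ) - (y:ℂ)))) *
              (Θ₀ y : ℂ))
          (Set.Ici x) ∧
        IntegrableOn
          (fun y : ℝ =>
            (Complex.exp (-2*μ*((x:ℂ) - (y:ℂ))) + Complex.exp (2*μ*((x:ℂ) - (y:ℂ)))) *
              (∫ τ in Set.Ici y, (Θ₀ τ : ℂ)))
          (Set.Ici x) ∧
        (∫ y in Set.Ici x,
            (Complex.exp (-2*μ*((x:ℂ) - (y:ℂ))) - Complex.exp (2*μ*((x:ℂ) - (y:ℂ)))) *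
              (Θ₀ y : ℂ)) =
          2*μ * ∫ y in Set.Ici x,
            (Complex.exp (-2*μ*((x:ℂ) - (y:ℂ))) + Complex.exp (2*μ*((x:ℂ) - (y:ℂ)))) *
              (∫ τ in Set.Ici y, (Θ₀ τ : ℂ))) ∧
      (∀ x ≥ max x₀ 0,
        ‖∫ y in Set.Ici x,
            (Complex.exp (-2*μ*((x:ℂ) - (y:ℂ))) + Complex.exp (2*μ*((x:ℂ) - (y:ℂ)))) *
              (∫ τ in Set.Ici y, (Θ₀ τ : ℂ))‖ ≤ C * Real.exp (-α * x)) := by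
  have hf : ContinuousOn (fun τ => (Θ₀ τ : ℂ)) (Ici x₀) :=
    Complex.continuous_ofReal.comp_continuousOn hΘcont
  have hbd : ∀ y ≥ x₀, ‖(Θ₀ y : ℂ)‖ ≤ K * exp (-α * y) := fun y hy => by
    simpa [Complex.norm_real] using hΘbd y hy
  have hfrom : ∀ x ≥ x₀, ContinuousOn (fun τ => (Θ₀ τ : ℂ)) (Ici x) ∧
      ∀ y ≥ x, ‖(Θ₀ y : ℂ)‖ ≤ K * exp (-α * y) := fun x hx =>
    ⟨hf.mono (Ici_subset_Ici.2 hx), fun y hy => hbd y (hx.trans hy)⟩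
  have hgap : 0 < α - 2 * μ.re := sub_pos.2 hμre'
  refine ⟨2 * K / α / (α - 2 * μ.re), by positivity, fun x hx => ?_, fun x hx => ?_⟩
  · obtain ⟨hfx, hbdx⟩ := hfrom x hx
    refine ⟨fun y hy => integrableOn_Ici_of_norm_le_exp hα (hfrom y hy).1 (hfrom y hy).2,
      ?_, ?_, ?_⟩
    · rw [integrableOn_Ici_iff_integrableOn_Ioi]
      exact integrableOn_sinhKernel_mul hfx hbdx hμre hμre'
    · rw [integrableOn_Ici_iff_integrableOn_Ioi]
      exact integrableOn_coshKernel_mul_integral_Ici hα hfx hbdx hμre hμre'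
    · rw [integral_Ici_eq_integral_Ioi (x := x), integral_Ici_eq_integral_Ioi (x := x)]
      exact integral_sinhKernel_mul_eq hα hfx hbdx hμre hμre'
  · rw [integral_Ici_eq_integral_Ioi (x := x)]
    exact norm_integral_coshKernel_mul_integral_Ici_le hα (hfrom x (le_of_max_le_left hx)).2
      hμre hμre'
end

section
/- Let η ≥ 0, C > 0, d ≥ 0, ρ > 0, t > 0 and a > 0, and let F be a continuous ℂ-valued function on the parabolic arc {(ρ + i k)² : k ∈ [−a,a]} satisfying |F((ρ+ik)²)| ≤ C (ρ² + k²)^{−1/2} e^{−η √(ρ²+k²) · d} for all |k| ≤ a. Then the contour integral of e^{λ t} F(λ) over the arc λ(k) = (ρ+ik)², k ∈ [−a,a], satisfies the bound |(1/(2π)) ∫_{−a}^{a} e^{(ρ+ik)² t} F((ρ+ik)²) · 2(ρ+ik) dk| ≤ (C/√(π t)) e^{ρ² t − ρ η d}. -/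
/-!
On the arc `λ = (ρ + ik)²` one has `|e^{λt}| = e^{(ρ² - k²)t}` and `|dλ/dk| = 2√(ρ² + k²)`, which
cancels the factor `(ρ² + k²)^{-1/2}` in the bound on `F`. Since `√(ρ² + k²) ≥ ρ`, the integrand is
dominated by the Gaussian `2C e^{ρ²t - ρηd} e^{-tk²}`, whose integral over all of `ℝ` is
`2C e^{ρ²t - ρηd} √(π/t)`.
-/

open Complex Real Set MeasureTheory

lemma norm_exp_sq_ofReal_add_I_mul_mul (ρ k t : ℝ) :
    ‖Complex.exp (((ρ : ℂ) + I * k) ^ 2 * t)‖ = Real.exp ((ρ ^ 2 - k ^ 2) * t) := by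
  rw [Complex.norm_exp]
  congr 1
  simp [sq]

lemma norm_ofReal_add_I_mul (ρ k : ℝ) : ‖(ρ : ℂ) + I * k‖ = √(ρ ^ 2 + k ^ 2) := by
  rw [mul_comm, Complex.norm_add_mul_I]

lemma rpow_neg_half_mul_sqrt {s : ℝ} (hs : 0 < s) : s ^ (-(1 : ℝ) / 2) * √s = 1 := by
  rw [neg_div, Real.rpow_neg hs.le, ← Real.sqrt_eq_rpow, inv_mul_cancel₀ (Real.sqrt_pos.2 hs).ne']

lemma norm_intervalIntegral_le_mul_sqrt_pi_div_of_norm_le_gaussian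
    {E : Type*} [NormedAddCommGroup E] [NormedSpace ℝ E] {f : ℝ → E} {M t a : ℝ}
    (ht : 0 < t) (ha : 0 ≤ a) (hf : ∀ k ∈ Icc (-a) a, ‖f k‖ ≤ M * Real.exp (-t * k ^ 2)) :
    ‖∫ k in (-a)..a, f k‖ ≤ M * √(π / t) := by
  have hM : 0 ≤ M := by simpa using (norm_nonneg _).trans (hf 0 ⟨by linarith, ha⟩)
  have hgauss := integrable_exp_neg_mul_sq ht
  have hab : -a ≤ a := by linarith
  calc ‖∫ k in (-a)..a, f k‖ ≤ ∫ k in (-a)..a, M * Real.exp (-t * k ^ 2) :=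
        intervalIntegral.norm_integral_le_of_norm_le hab
          (ae_of_all _ fun k hk => hf k (Ioc_subset_Icc_self hk))
          (hgauss.const_mul M).intervalIntegrable
    _ = M * ∫ k in Ioc (-a) a, Real.exp (-t * k ^ 2) := by
        rw [intervalIntegral.integral_const_mul, intervalIntegral.integral_of_le hab]
    _ ≤ M * ∫ k, Real.exp (-t * k ^ 2) := by
        refine mul_le_mul_of_nonneg_left ?_ hM
        exact setIntegral_le_integral hgauss (ae_of_all _ fun k => (Real.exp_pos _).le)
    _ = M * √(π / t) := by rw [integral_gaussian]

lemma norm_exp_sq_mul_mul_two_mul_le_gaussian {η C d ρ t k : ℝ} {w : ℂ} (hη : 0 ≤ η)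
    (hd : 0 ≤ d) (hρ : 0 < ρ)
    (hw : ‖w‖ ≤ C * (ρ ^ 2 + k ^ 2) ^ (-(1 : ℝ) / 2) * Real.exp (-η * √(ρ ^ 2 + k ^ 2) * d)) :
    ‖Complex.exp (((ρ : ℂ) + I * k) ^ 2 * t) * w * (2 * ((ρ : ℂ) + I * k))‖ ≤
      2 * C * Real.exp (ρ ^ 2 * t - ρ * η * d) * Real.exp (-t * k ^ 2) := by
  set s := ρ ^ 2 + k ^ 2
  have hs : 0 < s := by positivity
  have hρs : ρ ≤ √s :=
    (le_abs_self ρ).trans (Real.abs_le_sqrt (le_add_of_nonneg_right (sq_nonneg k)))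
  have hC : 0 ≤ C := by
    have := (norm_nonneg w).trans hw
    exact nonneg_of_mul_nonneg_left (nonneg_of_mul_nonneg_left this (Real.exp_pos _))
      (Real.rpow_pos_of_pos hs _)
  calc ‖Complex.exp (((ρ : ℂ) + I * k) ^ 2 * t) * w * (2 * ((ρ : ℂ) + I * k))‖
        = Real.exp ((ρ ^ 2 - k ^ 2) * t) * ‖w‖ * (2 * √s) := by
          rw [norm_mul, norm_mul, norm_mul, norm_exp_sq_ofReal_add_I_mul_mul,
            norm_ofReal_add_I_mul, Complex.norm_two]
    _ ≤ Real.exp ((ρ ^ 2 - k ^ 2) * t) * (C * s ^ (-(1 : ℝ) / 2) * Real.exp (-η * √s * d)) *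
          (2 * √s) := by gcongr
    _ = 2 * C * Real.exp ((ρ ^ 2 - k ^ 2) * t + -η * √s * d) := by
          rw [Real.exp_add]
          linear_combination (2 * C * Real.exp ((ρ ^ 2 - k ^ 2) * t) * Real.exp (-η * √s * d)) *
            rpow_neg_half_mul_sqrt hs
    _ ≤ 2 * C * Real.exp (ρ ^ 2 * t - ρ * η * d + -t * k ^ 2) := by
          gcongr 2 * C * Real.exp ?_
          nlinarith [mul_le_mul_of_nonneg_left hρs (mul_nonneg hη hd)]
    _ = 2 * C * Real.exp (ρ ^ 2 * t - ρ * η * d) * Real.exp (-t * k ^ 2) := by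
          rw [Real.exp_add]; ring

theorem parabolic_contour_estimate_general
    (η C d ρ t a : ℝ) (hη : 0 ≤ η) (hd : 0 ≤ d) (hρ : 0 < ρ)
    (ht : 0 < t) (ha : 0 < a)
    (F : ℂ → ℂ)
    (hFbd : ∀ k : ℝ, |k| ≤ a →
      ‖F (((ρ:ℂ) + Complex.I * (k:ℂ)) ^ 2)‖ ≤
        C * (ρ ^ 2 + k ^ 2) ^ (-(1:ℝ)/2) * Real.exp (-η * Real.sqrt (ρ ^ 2 + k ^ 2) * d)) :
    ‖(1 / (2 * Real.pi)) •
        ∫ k in (-a)..a,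
          Complex.exp ((((ρ:ℂ) + Complex.I * (k:ℂ)) ^ 2) * (t:ℂ)) *
            F (((ρ:ℂ) + Complex.I * (k:ℂ)) ^ 2) * (2 * ((ρ:ℂ) + Complex.I * (k:ℂ)))‖ ≤
      (C / Real.sqrt (Real.pi * t)) * Real.exp (ρ ^ 2 * t - ρ * η * d) := by
  have hintegral := norm_intervalIntegral_le_mul_sqrt_pi_div_of_norm_le_gaussian ht ha.le
    fun k hk => norm_exp_sq_mul_mul_two_mul_le_gaussian (t := t) hη hd hρ (hFbd k (abs_le.2 hk))
  rw [norm_smul, Real.norm_of_nonneg (by positivity)]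
  calc _ ≤ 1 / (2 * π) * (2 * C * Real.exp (ρ ^ 2 * t - ρ * η * d) * √(π / t)) := by gcongr
    _ = C / √(π * t) * Real.exp (ρ ^ 2 * t - ρ * η * d) := by
      rw [Real.sqrt_div' _ ht.le, Real.sqrt_mul Real.pi_pos.le]
      field_simp
      rw [Real.sq_sqrt Real.pi_pos.le, mul_comm]

/-- Estimate for the inverse Laplace transform along the parabolic arc
`λ(k) = (ρ + ik)²`, `k ∈ [-a, a]`, with `dλ = 2i(ρ + ik) dk` (the factor `i` of `dλ`
being absorbed into the `1/(2πi)` prefactor):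
`|(1/2π) ∫ e^{λt} F(λ) dλ| ≤ (C/√(πt)) e^{ρ²t - ρηd}`. -/
theorem parabolic_contour_estimate
    (η C d ρ t a : ℝ) (hη : 0 ≤ η) (hC : 0 < C) (hd : 0 ≤ d) (hρ : 0 < ρ)
    (ht : 0 < t) (ha : 0 < a)
    (F : ℂ → ℂ)
    (hFcont : ContinuousOn (fun k : ℝ => F (((ρ:ℂ) + Complex.I * (k:ℂ)) ^ 2))
      (Set.Icc (-a) a))
    (hFbd : ∀ k : ℝ, |k| ≤ a →
      ‖F (((ρ:ℂ) + Complex.I * (k:ℂ)) ^ 2)‖ ≤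
        C * (ρ ^ 2 + k ^ 2) ^ (-(1:ℝ)/2) * Real.exp (-η * Real.sqrt (ρ ^ 2 + k ^ 2) * d)) :
    ‖(1 / (2 * Real.pi)) •
        ∫ k in (-a)..a,
          Complex.exp ((((ρ:ℂ) + Complex.I * (k:ℂ)) ^ 2) * (t:ℂ)) *
            F (((ρ:ℂ) + Complex.I * (k:ℂ)) ^ 2) * (2 * ((ρ:ℂ) + Complex.I * (k:ℂ)))‖ ≤
      (C / Real.sqrt (Real.pi * t)) * Real.exp (ρ ^ 2 * t - ρ * η * d) :=
  parabolic_contour_estimate_general η C d ρ t a hη hd hρ ht ha F hFbd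
end

section
/- Let a, t, ρ, M > 0 and let H : [−a,a] → ℂ be continuous with Re H even, Im H odd, |Re H(k)| ≤ M for all k, and |Im H(k)| ≤ M |k| for all k. Then the integral ∫_{−a}^{a} e^{−k² t} (ρ + i k) H(k) dk is real, and its absolute value is at most M √π ( ρ t^{−1/2} + (1/2) t^{−3/2} ). -/
open MeasureTheory Real Set

lemma odd_interval_integral_zero {a : ℝ} (ha : 0 ≤ a) {g : ℝ → ℝ}
    (hgi : IntervalIntegrable g volume (-a) a)
    (hodd : ∀ k ∈ Set.Icc (-a) a, g (-k) = - g k) :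
    ∫ k in (-a)..a, g k = 0 := by
  have h1 : (∫ k in (-a)..a, g (-k)) = ∫ k in (-a)..a, g k := by
    simpa using intervalIntegral.integral_comp_neg (a := -a) (b := a) g
  have h2 : (∫ k in (-a)..a, g (-k)) = ∫ k in (-a)..a, - g k := by
    apply intervalIntegral.integral_congr
    intro k hk
    rw [Set.uIcc_of_le (by linarith : -a ≤ a)] at hk
    exact hodd k hk
  rw [intervalIntegral.integral_neg] at h2
  linarith


/-- Parity cancellation producing the `t^{-3/2}` decay rate: for `H` with even real part
(bounded by `M`) and odd imaginary part (bounded by `M|k|`), the Gaussian contour integral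
`∫_{-a}^{a} e^{-k²t} (ρ + ik) H(k) dk` is real and bounded by
`M √π (ρ t^{-1/2} + (1/2) t^{-3/2})`. -/
theorem parity_cancellation_estimate
    (a t ρ M : ℝ) (ha : 0 < a) (ht : 0 < t) (hρ : 0 < ρ) (hM : 0 < M)
    (H : ℝ → ℂ) (hHcont : ContinuousOn H (Set.Icc (-a) a))
    (hHeven : ∀ k ∈ Set.Icc (-a) a, (H (-k)).re = (H k).re)
    (hHodd : ∀ k ∈ Set.Icc (-a) a, (H (-k)).im = -(H k).im)
    (hHreBd : ∀ k ∈ Set.Icc (-a) a, |(H k).re| ≤ M)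
    (hHimBd : ∀ k ∈ Set.Icc (-a) a, |(H k).im| ≤ M * |k|) :
    (∫ k in (-a)..a,
        ((Real.exp (-k ^ 2 * t) : ℝ) : ℂ) * ((ρ:ℂ) + Complex.I * (k:ℂ)) * H k).im = 0 ∧
    ‖∫ k in (-a)..a,
        ((Real.exp (-k ^ 2 * t) : ℝ) : ℂ) * ((ρ:ℂ) + Complex.I * (k:ℂ)) * H k‖ ≤
      M * Real.sqrt Real.pi * (ρ * t ^ (-(1:ℝ)/2) + (1/2) * t ^ (-(3:ℝ)/2)) := by
  have haa : -a ≤ a := by linarith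
  set f : ℝ → ℂ := fun k =>
    ((Real.exp (-k ^ 2 * t) : ℝ) : ℂ) * ((ρ:ℂ) + Complex.I * (k:ℂ)) * H k with hf
  -- continuity / integrability
  have hc1 : Continuous fun k:ℝ => ((Real.exp (-k ^ 2 * t) : ℝ) : ℂ) :=
    Complex.continuous_ofReal.comp (Real.continuous_exp.comp (by fun_prop))
  have hc2 : Continuous fun k:ℝ => (ρ:ℂ) + Complex.I * (k:ℂ) := by fun_prop
  have hfc : ContinuousOn f (Set.Icc (-a) a) :=
    ((hc1.mul hc2).continuousOn).mul hHcont
  have hfi : IntervalIntegrable f volume (-a) a := by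
    apply ContinuousOn.intervalIntegrable
    rwa [Set.uIcc_of_le haa]
  -- re / im formulas
  have hre : ∀ k : ℝ, (f k).re
      = Real.exp (-k^2*t) * (ρ * (H k).re - k * (H k).im) := by
    intro k
    simp only [hf, Complex.mul_re, Complex.mul_im, Complex.add_re, Complex.add_im,
      Complex.I_re, Complex.I_im, Complex.ofReal_re, Complex.ofReal_im]
    ring
  have him : ∀ k : ℝ, (f k).im
      = Real.exp (-k^2*t) * (ρ * (H k).im + k * (H k).re) := by
    intro k
    simp only [hf, Complex.mul_re, Complex.mul_im, Complex.add_re, Complex.add_im,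
      Complex.I_re, Complex.I_im, Complex.ofReal_re, Complex.ofReal_im]
    ring
  have hmemneg : ∀ k ∈ Set.Icc (-a) a, -k ∈ Set.Icc (-a) a := by
    intro k hk
    simp only [Set.mem_Icc] at hk ⊢
    constructor <;> linarith [hk.1, hk.2]
  -- interval integrability of im f and re f
  have hfimi : IntervalIntegrable (fun k => (f k).im) volume (-a) a := by
    apply ContinuousOn.intervalIntegrable
    rw [Set.uIcc_of_le haa]
    exact Complex.continuous_im.comp_continuousOn hfc
  have hfrei : IntervalIntegrable (fun k => (f k).re) volume (-a) a := by
    apply ContinuousOn.intervalIntegrable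
    rw [Set.uIcc_of_le haa]
    exact Complex.continuous_re.comp_continuousOn hfc
  -- the imaginary part of the integral
  have hIm : (∫ k in (-a)..a, f k).im = ∫ k in (-a)..a, (f k).im := by
    rw [intervalIntegral.integral_of_le haa, intervalIntegral.integral_of_le haa]
    simpa using (integral_im (hfi.1)).symm
  have hImzero : (∫ k in (-a)..a, f k).im = 0 := by
    rw [hIm]
    apply odd_interval_integral_zero (le_of_lt ha) hfimi
    intro k hk
    rw [him, him]
    have h1 := hHeven k hk
    have h2 := hHodd k hk
    rw [h1, h2]
    ring_nf
  refine ⟨hImzero, ?_⟩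
  -- norm equals |re|
  have hnorm : ‖∫ k in (-a)..a, f k‖ = |(∫ k in (-a)..a, f k).re| := by
    have : (∫ k in (-a)..a, f k) = (((∫ k in (-a)..a, f k).re : ℝ) : ℂ) :=
      Complex.ext rfl (by simp [hImzero])
    rw [this]
    simp
  rw [hnorm]
  have hRe : (∫ k in (-a)..a, f k).re = ∫ k in (-a)..a, (f k).re := by
    rw [intervalIntegral.integral_of_le haa, intervalIntegral.integral_of_le haa]
    simpa using (integral_re (hfi.1)).symm
  rw [hRe]
  -- bound function
  set B : ℝ → ℝ := fun k => Real.exp (-t*k^2) * (ρ*M + M*k^2) with hB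
  have hBc : Continuous B := by
    apply Continuous.mul
    · exact Real.continuous_exp.comp (by fun_prop)
    · fun_prop
  have hptBd : ∀ k ∈ Set.Icc (-a) a, |(f k).re| ≤ B k := by
    intro k hk
    rw [hre, hB]
    have he : Real.exp (-k^2*t) = Real.exp (-t*k^2) := by ring_nf
    rw [he, abs_mul, abs_of_pos (Real.exp_pos _)]
    apply mul_le_mul_of_nonneg_left _ (le_of_lt (Real.exp_pos _))
    calc |ρ * (H k).re - k * (H k).im|
        ≤ |ρ * (H k).re| + |k * (H k).im| := abs_sub _ _
      _ = ρ * |(H k).re| + |k| * |(H k).im| := by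
          rw [abs_mul, abs_mul, abs_of_pos hρ]
      _ ≤ ρ * M + |k| * (M * |k|) :=
          add_le_add (mul_le_mul_of_nonneg_left (hHreBd k hk) (le_of_lt hρ))
            (mul_le_mul_of_nonneg_left (hHimBd k hk) (abs_nonneg k))
      _ = ρ * M + M * k^2 := by
          rw [show |k| * (M * |k|) = M * (|k| * |k|) by ring, abs_mul_abs_self, sq]
  -- interval integral of |re f| bounded by interval integral of B
  have step1 : |∫ k in (-a)..a, (f k).re| ≤ ∫ k in (-a)..a, |(f k).re| :=
    intervalIntegral.abs_integral_le_integral_abs haa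
  have step2 : (∫ k in (-a)..a, |(f k).re|) ≤ ∫ k in (-a)..a, B k := by
    apply intervalIntegral.integral_mono_on haa _ (hBc.intervalIntegrable _ _) hptBd
    exact hfrei.abs
  -- B integrable on ℝ
  have hInt1 : Integrable (fun k:ℝ => Real.exp (-t*k^2)) := integrable_exp_neg_mul_sq ht
  have hInt2 : Integrable (fun k:ℝ => k^2 * Real.exp (-t*k^2)) := by
    have := integrable_rpow_mul_exp_neg_mul_sq ht (by norm_num : (-1:ℝ) < 2)
    simpa [show ∀ x:ℝ, x ^ (2:ℝ) = x^2 from fun x => by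
      rw [show (2:ℝ) = ((2:ℕ):ℝ) by norm_num, Real.rpow_natCast]] using this
  have hBint : Integrable B := by
    have : B = fun k => (ρ*M) * Real.exp (-t*k^2) + M * (k^2 * Real.exp (-t*k^2)) := by
      funext k; rw [hB]; ring
    rw [this]
    exact (hInt1.const_mul _).add (hInt2.const_mul _)
  have step3 : (∫ k in (-a)..a, B k) ≤ ∫ k:ℝ, B k := by
    rw [intervalIntegral.integral_of_le haa]
    apply setIntegral_le_integral hBint
    filter_upwards with k
    have : 0 ≤ ρ*M + M*k^2 := by positivity
    exact mul_nonneg (le_of_lt (Real.exp_pos _)) this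
  -- compute ∫ B
  have hmom : ∫ k:ℝ, k^2 * Real.exp (-t*k^2) = t ^ (-(3:ℝ)/2) * Real.sqrt Real.pi / 2 := by
    have h2 : ∀ x:ℝ, x ^ (2:ℝ) = x^2 := fun x => by
      rw [show (2:ℝ) = ((2:ℕ):ℝ) by norm_num, Real.rpow_natCast]
    have key := integral_rpow_mul_exp_neg_mul_rpow (p := 2) (q := 2) (b := t)
      (by norm_num) (by norm_num) ht
    simp_rw [h2] at key
    have heven : ∫ k:ℝ, k^2 * Real.exp (-t*k^2)
        = 2 * ∫ k in Ioi (0:ℝ), k^2 * Real.exp (-t*k^2) := by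
      rw [← integral_comp_abs (f := fun x => x^2 * Real.exp (-t*x^2))]
      simp [sq_abs]
    rw [heven, key, show -((2:ℝ)+1)/2 = -(3:ℝ)/2 by norm_num,
      show ((2:ℝ)+1)/2 = (1:ℝ)/2 + 1 by norm_num,
      Real.Gamma_add_one (by norm_num), Real.Gamma_one_half_eq]
    ring
  have hBval : (∫ k:ℝ, B k)
      = M * Real.sqrt Real.pi * (ρ * t ^ (-(1:ℝ)/2) + (1/2) * t ^ (-(3:ℝ)/2)) := by
    have hsplit : (∫ k:ℝ, B k)
        = (ρ*M) * (∫ k:ℝ, Real.exp (-t*k^2)) + M * ∫ k:ℝ, k^2 * Real.exp (-t*k^2) := by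
      rw [← integral_const_mul, ← integral_const_mul,
        ← integral_add (hInt1.const_mul _) (hInt2.const_mul _)]
      congr 1; funext k; rw [hB]; ring
    rw [hsplit, integral_gaussian, hmom]
    have hs : Real.sqrt (Real.pi / t) = Real.sqrt Real.pi * t ^ (-(1:ℝ)/2) := by
      rw [Real.sqrt_div (le_of_lt Real.pi_pos), show -(1:ℝ)/2 = -(1/2:ℝ) by norm_num,
        Real.rpow_neg (le_of_lt ht), ← Real.sqrt_eq_rpow, div_eq_mul_inv]
    rw [hs]
    ring
  calc |∫ k in (-a)..a, (f k).re| ≤ ∫ k in (-a)..a, |(f k).re| := step1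
    _ ≤ ∫ k in (-a)..a, B k := step2
    _ ≤ ∫ k:ℝ, B k := step3
    _ = _ := hBval
end

section
/- Let b̄ > 0 and ν < 0, and define μ⁺(λ) := −b̄/2 + (1/2)√(b̄² − 4ν + 4λ) using the principal square root. Then there exist δ₀ > 0, δ₁ > 0 and M_μ > 0 such that for every λ ∈ ℂ ∖ (−∞,0] with Re λ ≥ −δ₀ − δ₁ |Im λ| and |λ| ≤ M_μ, one has Re μ⁺(λ) > Re √λ, where √λ is the principal square root. -/
open Topology

lemma csqrt_eq_sqrt : csqrt = Complex.sqrt := by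
  funext z
  rw [csqrt, Complex.sqrt, one_div]

noncomputable def muPlus (bbar ν : ℝ) (lam : ℂ) : ℂ :=
  -(bbar / 2 : ℂ) + (1 / 2 : ℂ) * csqrt ((bbar : ℂ) ^ 2 - 4 * (ν : ℂ) + 4 * lam)

lemma continuousAt_csqrt {z : ℂ} (hz : 0 ≤ z.re) : ContinuousAt csqrt z :=
  csqrt_eq_sqrt ▸ Complex.continuousAt_sqrt (.inl hz)

lemma continuousAt_muPlus_zero (bbar : ℝ) {ν : ℝ} (hν : 4 * ν ≤ bbar ^ 2) :
    ContinuousAt (muPlus bbar ν) 0 := by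
  have hradicand : 0 ≤ ((bbar : ℂ) ^ 2 - 4 * (ν : ℂ) + 4 * 0).re := by
    norm_num [pow_two]
    nlinarith
  exact continuousAt_const.add <| continuousAt_const.mul <|
    (continuousAt_csqrt hradicand).comp (f := fun lam ↦ (bbar : ℂ) ^ 2 - 4 * (ν : ℂ) + 4 * lam)
      (by fun_prop)

lemma lt_sqrt_sq_sub_of_neg (b : ℝ) {ν : ℝ} (hν : ν < 0) : b < √(b ^ 2 - 4 * ν) :=
  calc b ≤ |b| := le_abs_self b
    _ = √(b ^ 2) := (Real.sqrt_sq_eq_abs b).symm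
    _ < √(b ^ 2 - 4 * ν) := Real.sqrt_lt_sqrt (sq_nonneg b) (by linarith)

lemma re_muPlus_zero_pos (bbar : ℝ) {ν : ℝ} (hν : ν < 0) : 0 < (muPlus bbar ν 0).re := by
  have hradicand : (bbar : ℂ) ^ 2 - 4 * (ν : ℂ) + 4 * 0 = ((bbar ^ 2 - 4 * ν : ℝ) : ℂ) := by
    push_cast
    ring
  simp only [muPlus, hradicand, csqrt_eq_sqrt, Complex.add_re, Complex.mul_re,
    Complex.re_sqrt_ofReal]
  norm_num
  linarith [lt_sqrt_sq_sub_of_neg bbar hν]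

theorem mu_plus_dominates_sqrt_general
    (bbar ν : ℝ) (hν : ν < 0) :
    ∃ δ₀ > 0, ∃ δ₁ > 0, ∃ Mμ > 0, ∀ lam : ℂ,
      lam ∉ negRealAxis →
      -δ₀ - δ₁ * |lam.im| ≤ lam.re →
      ‖lam‖ ≤ Mμ →
      (csqrt lam).re <
        (-(bbar/2 : ℂ) + (1/2 : ℂ) * csqrt ((bbar:ℂ)^2 - 4*(ν:ℂ) + 4*lam)).re := by
  have hat0 : (csqrt 0).re < (muPlus bbar ν 0).re := by
    simpa [csqrt_eq_sqrt] using re_muPlus_zero_pos bbar hν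
  have hnear : ∀ᶠ lam in 𝓝 0, (csqrt lam).re < (muPlus bbar ν lam).re :=
    (Complex.continuous_re.continuousAt.comp (continuousAt_csqrt le_rfl)).eventually_lt
      (Complex.continuous_re.continuousAt.comp (continuousAt_muPlus_zero bbar (by nlinarith)))
      hat0
  obtain ⟨M, hM, hball⟩ := Metric.eventually_nhds_iff.1 hnear
  refine ⟨1, one_pos, 1, one_pos, M / 2, half_pos hM, fun lam _ _ hlam ↦ hball ?_⟩
  rw [dist_zero_right]
  linarith

/-- Near the branch point `λ = 0`, in a small sector, `Re μ⁺(λ) > Re √λ`, where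
`μ⁺(λ) = -b̄/2 + (1/2)√(b̄² - 4ν + 4λ)`. -/
theorem mu_plus_dominates_sqrt
    (bbar ν : ℝ) (hbbar : 0 < bbar) (hν : ν < 0) :
    ∃ δ₀ > 0, ∃ δ₁ > 0, ∃ Mμ > 0, ∀ lam : ℂ,
      lam ∉ negRealAxis →
      -δ₀ - δ₁ * |lam.im| ≤ lam.re →
      ‖lam‖ ≤ Mμ →
      (csqrt lam).re <
        (-(bbar/2 : ℂ) + (1/2 : ℂ) * csqrt ((bbar:ℂ)^2 - 4*(ν:ℂ) + 4*lam)).re :=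
  mu_plus_dominates_sqrt_general bbar ν hν
end

section
/- Let K, κ, r, C > 0. Suppose t ≥ 1 and G : ℝ × ℝ → ℂ is measurable with |G(x,y)| ≤ C t^{−1/2} e^{−(x−y)²/(κ t)} whenever |x−y| ≥ K t, and |G(x,y)| ≤ C ( (1+|x−y|) t^{−3/2} e^{−(x−y)²/(κ t)} + e^{−r t} ) whenever |x−y| ≤ K t. Then there exists C' > 0, depending only on K, κ, r, C (and not on t, G, h, x), such that for every measurable h : ℝ → ℂ with ∫_ℝ (1+|y|) |h(y)| dy < ∞ and every x ∈ ℝ: |∫_ℝ G(x,y) h(y) dy| ≤ C' (1+|x|) (1+t)^{−3/2} ∫_ℝ (1+|y|) |h(y)| dy. -/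
open MeasureTheory

set_option maxHeartbeats 1000000

lemma exp_neg_le_inv' (s : ℝ) (hs : 0 < s) : Real.exp (-s) ≤ s⁻¹ := by
  rw [Real.exp_neg]
  have h := Real.add_one_le_exp s
  exact inv_anti₀ hs (by linarith)

lemma pointwise_green_bound (K κ r C : ℝ) (hK : 0 < K) (hκ : 0 < κ) (hr : 0 < r) (hC : 0 < C)
    (t : ℝ) (ht : 1 ≤ t) (G : ℝ → ℝ → ℂ)
    (hfar : ∀ x y : ℝ, K * t ≤ |x - y| →
        ‖G x y‖ ≤ C * t ^ (-(1:ℝ)/2) * Real.exp (-(x - y) ^ 2 / (κ * t)))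
    (hnear : ∀ x y : ℝ, |x - y| ≤ K * t →
        ‖G x y‖ ≤ C * ((1 + |x - y|) * t ^ (-(3:ℝ)/2) * Real.exp (-(x - y) ^ 2 / (κ * t)) +
          Real.exp (-r * t))) (x y : ℝ) :
    ‖G x y‖ ≤ (3 * C * (κ / K ^ 2 + 1 + 4 / r ^ 2)) * (1 + |x - y|) * (1 + t) ^ (-(3:ℝ)/2) := by
  have ht0 : (0:ℝ) < t := lt_of_lt_of_le one_pos ht
  set A : ℝ := κ / K ^ 2 + 1 + 4 / r ^ 2 with hA
  have hA1 : 0 < κ / K ^ 2 := div_pos hκ (pow_pos hK 2)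
  have hA2 : 0 < 4 / r ^ 2 := div_pos (by norm_num) (pow_pos hr 2)
  have hApos : 0 < A := by positivity
  -- step A : t^(-3/2) ≤ 3 * (1+t)^(-3/2)
  have ha : (0:ℝ) < t ^ ((3:ℝ)/2) := Real.rpow_pos_of_pos ht0 _
  have hb : (0:ℝ) < (1 + t) ^ ((3:ℝ)/2) := Real.rpow_pos_of_pos (by linarith) _
  have h23 : (2:ℝ) ^ ((3:ℝ)/2) ≤ 3 := by
    have hx : ((2:ℝ) ^ ((3:ℝ)/2)) ^ (2:ℕ) = 8 := by
      rw [← Real.rpow_natCast ((2:ℝ) ^ ((3:ℝ)/2)) 2, ← Real.rpow_mul (by norm_num : (0:ℝ) ≤ 2)]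
      norm_num
    nlinarith [Real.rpow_nonneg (by norm_num : (0:ℝ) ≤ 2) ((3:ℝ)/2)]
  have hba : (1 + t) ^ ((3:ℝ)/2) ≤ 3 * t ^ ((3:ℝ)/2) := by
    calc (1 + t) ^ ((3:ℝ)/2) ≤ (2 * t) ^ ((3:ℝ)/2) := by
          apply Real.rpow_le_rpow (by linarith) (by linarith) (by norm_num)
      _ = 2 ^ ((3:ℝ)/2) * t ^ ((3:ℝ)/2) := Real.mul_rpow (by norm_num) ht0.le
      _ ≤ 3 * t ^ ((3:ℝ)/2) := by nlinarith
  have hstepA : t ^ (-(3:ℝ)/2) ≤ 3 * (1 + t) ^ (-(3:ℝ)/2) := by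
    have e1 : t ^ (-(3:ℝ)/2) = (t ^ ((3:ℝ)/2))⁻¹ := by
      rw [← Real.rpow_neg ht0.le]; norm_num
    have e2 : (1 + t) ^ (-(3:ℝ)/2) = ((1 + t) ^ ((3:ℝ)/2))⁻¹ := by
      rw [← Real.rpow_neg (by linarith : (0:ℝ) ≤ 1 + t)]; norm_num
    rw [e1, e2, inv_eq_one_div, ← div_eq_mul_inv, div_le_div_iff₀ ha hb]
    linarith
  have hsplit : t ^ (-(3:ℝ)/2) = t ^ (-(1:ℝ)/2) * t⁻¹ := by
    rw [← Real.rpow_neg_one t, ← Real.rpow_add ht0]; norm_num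
  have ht32 : (0:ℝ) < t ^ (-(3:ℝ)/2) := Real.rpow_pos_of_pos ht0 _
  have habs : (0:ℝ) ≤ |x - y| := abs_nonneg _
  -- main bound with t^(-3/2)
  have hmain : ‖G x y‖ ≤ C * A * (1 + |x - y|) * t ^ (-(3:ℝ)/2) := by
    rcases le_or_gt (K * t) |x - y| with hcase | hcase
    · -- far field
      have hz2 : (K * t) ^ 2 ≤ (x - y) ^ 2 := by
        nlinarith [sq_abs (x - y), mul_pos hK ht0]
      have hdiv : K ^ 2 * t / κ ≤ (x - y) ^ 2 / (κ * t) := by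
        rw [div_le_div_iff₀ hκ (mul_pos hκ ht0)]
        nlinarith
      have hexp : Real.exp (-(x - y) ^ 2 / (κ * t)) ≤ κ / (K ^ 2 * t) := by
        calc Real.exp (-(x - y) ^ 2 / (κ * t)) ≤ Real.exp (-(K ^ 2 * t / κ)) := by
              apply Real.exp_le_exp.mpr
              rw [neg_div]
              linarith
          _ ≤ (K ^ 2 * t / κ)⁻¹ := exp_neg_le_inv' _ (by positivity)
          _ = κ / (K ^ 2 * t) := by rw [inv_div]
      calc ‖G x y‖ ≤ C * t ^ (-(1:ℝ)/2) * Real.exp (-(x - y) ^ 2 / (κ * t)) := hfar x y hcase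
        _ ≤ C * t ^ (-(1:ℝ)/2) * (κ / (K ^ 2 * t)) := by
            have h12 : (0:ℝ) < t ^ (-(1:ℝ)/2) := Real.rpow_pos_of_pos ht0 _
            exact mul_le_mul_of_nonneg_left hexp (by positivity)
        _ = C * (κ / K ^ 2) * t ^ (-(3:ℝ)/2) := by rw [hsplit]; field_simp
        _ ≤ C * A * (1 + |x - y|) * t ^ (-(3:ℝ)/2) := by
            apply mul_le_mul_of_nonneg_right _ ht32.le
            calc C * (κ / K ^ 2) ≤ C * A := by
                  apply mul_le_mul_of_nonneg_left _ hC.le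
                  linarith
              _ ≤ C * A * (1 + |x - y|) := le_mul_of_one_le_right (by positivity) (by linarith)
    · -- near field
      have hexp1 : Real.exp (-(x - y) ^ 2 / (κ * t)) ≤ 1 := by
        apply Real.exp_le_one_iff.mpr
        rw [neg_div]
        have : (0:ℝ) ≤ (x - y) ^ 2 / (κ * t) := by positivity
        linarith
      have hexp2 : Real.exp (-r * t) ≤ 4 / r ^ 2 * t ^ (-(3:ℝ)/2) := by
        rw [neg_mul]
        have hq : r ^ 2 * t ^ 2 / 4 ≤ Real.exp (r * t) := by
          have h1 := Real.add_one_le_exp (r * t / 2)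
          have hpos : (0:ℝ) < r * t / 2 := by positivity
          have h1' : r * t / 2 ≤ Real.exp (r * t / 2) := by linarith
          have h2 : Real.exp (r * t) = Real.exp (r * t / 2) * Real.exp (r * t / 2) := by
            rw [← Real.exp_add]; ring_nf
          have h3 := mul_le_mul h1' h1' hpos.le (Real.exp_nonneg (r * t / 2))
          rw [h2]; nlinarith [h3]
        have h3 : Real.exp (-(r * t)) ≤ 4 / (r ^ 2 * t ^ 2) := by
          rw [Real.exp_neg]
          calc (Real.exp (r * t))⁻¹ ≤ (r ^ 2 * t ^ 2 / 4)⁻¹ := inv_anti₀ (by positivity) hq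
            _ = 4 / (r ^ 2 * t ^ 2) := by rw [inv_div]
        have h4 : t ^ (-(2:ℝ)) ≤ t ^ (-(3:ℝ)/2) :=
          Real.rpow_le_rpow_of_exponent_le ht (by norm_num)
        have h5 : (4:ℝ) / (r ^ 2 * t ^ 2) = 4 / r ^ 2 * t ^ (-(2:ℝ)) := by
          rw [Real.rpow_neg ht0.le, Real.rpow_two]
          field_simp
        rw [h5] at h3
        calc Real.exp (-(r * t)) ≤ 4 / r ^ 2 * t ^ (-(2:ℝ)) := h3
          _ ≤ 4 / r ^ 2 * t ^ (-(3:ℝ)/2) := mul_le_mul_of_nonneg_left h4 hA2.le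
      calc ‖G x y‖ ≤ C * ((1 + |x - y|) * t ^ (-(3:ℝ)/2) * Real.exp (-(x - y) ^ 2 / (κ * t)) +
              Real.exp (-r * t)) := hnear x y hcase.le
        _ ≤ C * ((1 + |x - y|) * t ^ (-(3:ℝ)/2) * 1 + 4 / r ^ 2 * t ^ (-(3:ℝ)/2)) := by
            apply mul_le_mul_of_nonneg_left _ hC.le
            have h6 : (1 + |x - y|) * t ^ (-(3:ℝ)/2) * Real.exp (-(x - y) ^ 2 / (κ * t)) ≤
                (1 + |x - y|) * t ^ (-(3:ℝ)/2) * 1 :=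
              mul_le_mul_of_nonneg_left hexp1 (by positivity)
            linarith [hexp2]
        _ ≤ C * A * (1 + |x - y|) * t ^ (-(3:ℝ)/2) := by
            have h7 : (1 + |x - y|) + 4 / r ^ 2 ≤ A * (1 + |x - y|) := by
              rw [hA]
              nlinarith [mul_nonneg hA1.le habs, mul_nonneg hA2.le habs]
            have h8 := mul_le_mul_of_nonneg_left h7 (mul_nonneg hC.le ht32.le)
            nlinarith [h8]
  calc ‖G x y‖ ≤ C * A * (1 + |x - y|) * t ^ (-(3:ℝ)/2) := hmain
    _ ≤ C * A * (1 + |x - y|) * (3 * (1 + t) ^ (-(3:ℝ)/2)) := by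
        apply mul_le_mul_of_nonneg_left hstepA (by positivity)
    _ = 3 * C * A * (1 + |x - y|) * (1 + t) ^ (-(3:ℝ)/2) := by ring


/-- The large-time `L¹ → L^∞`-type estimate for the temporal Green's function: from the
pointwise bounds in the regimes `|x-y| ≥ Kt` and `|x-y| ≤ Kt` (for `t ≥ 1`) one gets
`|∫ G(x,y) h(y) dy| ≤ C' (1+|x|)(1+t)^{-3/2} ∫ (1+|y|)|h(y)| dy`. -/
theorem temporal_green_convolution_estimate
    (K κ r C : ℝ) (hK : 0 < K) (hκ : 0 < κ) (hr : 0 < r) (hC : 0 < C) :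
    ∃ C' > 0, ∀ t : ℝ, 1 ≤ t → ∀ G : ℝ → ℝ → ℂ,
      Measurable (Function.uncurry G) →
      (∀ x y : ℝ, K * t ≤ |x - y| →
        ‖G x y‖ ≤ C * t ^ (-(1:ℝ)/2) * Real.exp (-(x - y) ^ 2 / (κ * t))) →
      (∀ x y : ℝ, |x - y| ≤ K * t →
        ‖G x y‖ ≤ C * ((1 + |x - y|) * t ^ (-(3:ℝ)/2) * Real.exp (-(x - y) ^ 2 / (κ * t)) +
          Real.exp (-r * t))) →
      ∀ h : ℝ → ℂ, Measurable h → Integrable (fun y => (1 + |y|) * ‖h y‖) →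
      ∀ x : ℝ,
        ‖∫ y, G x y * h y‖ ≤
          C' * (1 + |x|) * (1 + t) ^ (-(3:ℝ)/2) * ∫ y, (1 + |y|) * ‖h y‖ := by
  refine ⟨3 * C * (κ / K ^ 2 + 1 + 4 / r ^ 2), by positivity, ?_⟩
  intro t ht G hG hfar hnear h hh hint x
  set M : ℝ := 3 * C * (κ / K ^ 2 + 1 + 4 / r ^ 2) with hM
  have hMpos : 0 < M := by positivity
  have hp : (0:ℝ) < (1 + t) ^ (-(3:ℝ)/2) :=
    Real.rpow_pos_of_pos (by linarith : (0:ℝ) < 1 + t) _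
  have hbound : ∀ y : ℝ, ‖G x y * h y‖ ≤
      M * (1 + |x|) * (1 + t) ^ (-(3:ℝ)/2) * ((1 + |y|) * ‖h y‖) := by
    intro y
    rw [norm_mul]
    have h1 := pointwise_green_bound K κ r C hK hκ hr hC t ht G hfar hnear x y
    have h2 : (1:ℝ) + |x - y| ≤ (1 + |x|) * (1 + |y|) := by
      have h3 : |x - y| ≤ |x| + |y| := by
        have := abs_add_le x (-y)
        simpa [sub_eq_add_neg] using this
      nlinarith [abs_nonneg x, abs_nonneg y, mul_nonneg (abs_nonneg x) (abs_nonneg y)]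
    calc ‖G x y‖ * ‖h y‖ ≤ (M * (1 + |x - y|) * (1 + t) ^ (-(3:ℝ)/2)) * ‖h y‖ :=
          mul_le_mul_of_nonneg_right h1 (norm_nonneg _)
      _ ≤ (M * ((1 + |x|) * (1 + |y|)) * (1 + t) ^ (-(3:ℝ)/2)) * ‖h y‖ := by
          apply mul_le_mul_of_nonneg_right _ (norm_nonneg _)
          apply mul_le_mul_of_nonneg_right _ hp.le
          exact mul_le_mul_of_nonneg_left h2 hMpos.le
      _ = M * (1 + |x|) * (1 + t) ^ (-(3:ℝ)/2) * ((1 + |y|) * ‖h y‖) := by ring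
  have hIg : Integrable (fun y : ℝ =>
      M * (1 + |x|) * (1 + t) ^ (-(3:ℝ)/2) * ((1 + |y|) * ‖h y‖)) :=
    hint.const_mul _
  calc ‖∫ y, G x y * h y‖ ≤
        ∫ y, M * (1 + |x|) * (1 + t) ^ (-(3:ℝ)/2) * ((1 + |y|) * ‖h y‖) :=
        norm_integral_le_of_norm_le hIg (Filter.Eventually.of_forall hbound)
    _ = M * (1 + |x|) * (1 + t) ^ (-(3:ℝ)/2) * ∫ y, (1 + |y|) * ‖h y‖ :=
        integral_const_mul _ _
end

section
/- Let C₁ ≥ 0, C₂ ≥ 0, Ω > 0, ω_∞ > 0, let χ : [0,∞) → [0,∞) be nondecreasing, let T ∈ (0,∞], and let Θ : [0,T) → [0,∞) be continuous. Assume Θ(0) < 2C₁Ω, 2C₁Ω < 1, 4C₁C₂ χ(ω_∞) Ω < 1, and Θ(t) ≤ C₁Ω + C₂ χ(ω_∞ Θ(t)) Θ(t)² for all t ∈ [0,T). Then Θ(t) < 2C₁Ω for all t ∈ [0,T). -/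
/-- The continuity (bootstrap) argument closing the nonlinear stability proof: if the
continuous quantity `Θ` on `[0,T)` (with `T ∈ (0,∞]`, modeled in `WithTop ℝ`) satisfies
`Θ(t) ≤ C₁Ω + C₂ χ(ω∞ Θ(t)) Θ(t)²`, starts below `2C₁Ω`, and the smallness conditions
`2C₁Ω < 1`, `4C₁C₂ χ(ω∞) Ω < 1` hold, then `Θ(t) < 2C₁Ω` for all `t ∈ [0,T)`. -/
theorem bootstrap_argument
    (C₁ C₂ Ω ωinf : ℝ) (hC₁ : 0 ≤ C₁) (hC₂ : 0 ≤ C₂) (hΩ : 0 < Ω) (hωinf : 0 < ωinf)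
    (χ : ℝ → ℝ) (hχnn : ∀ s ≥ (0:ℝ), 0 ≤ χ s) (hχmono : MonotoneOn χ (Set.Ici 0))
    (T : WithTop ℝ) (hT : 0 < T)
    (Θ : ℝ → ℝ)
    (hΘcont : ContinuousOn Θ {t : ℝ | 0 ≤ t ∧ (t : WithTop ℝ) < T})
    (hΘnn : ∀ t : ℝ, 0 ≤ t → (t : WithTop ℝ) < T → 0 ≤ Θ t)
    (hΘ0 : Θ 0 < 2 * C₁ * Ω)
    (hsmall₁ : 2 * C₁ * Ω < 1)
    (hsmall₂ : 4 * C₁ * C₂ * χ ωinf * Ω < 1)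
    (hΘbd : ∀ t : ℝ, 0 ≤ t → (t : WithTop ℝ) < T →
      Θ t ≤ C₁ * Ω + C₂ * χ (ωinf * Θ t) * Θ t ^ 2) :
    ∀ t : ℝ, 0 ≤ t → (t : WithTop ℝ) < T → Θ t < 2 * C₁ * Ω := by
  intro t ht htT
  by_contra hcon
  push_neg at hcon
  -- [0,t] is contained in the domain
  have hsub : Set.Icc (0:ℝ) t ⊆ {s : ℝ | 0 ≤ s ∧ (s : WithTop ℝ) < T} := by
    intro s hs
    exact ⟨hs.1, lt_of_le_of_lt (WithTop.coe_le_coe.mpr hs.2) htT⟩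
  have hcont : ContinuousOn Θ (Set.Icc (0:ℝ) t) := hΘcont.mono hsub
  -- intermediate value: there is s with Θ s = 2C₁Ω
  have hmem : (2 * C₁ * Ω) ∈ Set.Icc (Θ 0) (Θ t) := ⟨le_of_lt hΘ0, hcon⟩
  obtain ⟨s, hs, hΘs⟩ := intermediate_value_Icc ht hcont hmem
  have hs0 : (0:ℝ) ≤ s := hs.1
  have hsT : (s : WithTop ℝ) < T := (hsub hs).2
  have hχ0 : 0 ≤ χ ωinf := hχnn ωinf (le_of_lt hωinf)
  have hC₁Ω : 0 < C₁ * Ω := by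
    nlinarith [hΘnn 0 le_rfl hT, hΘ0]
  -- χ monotonicity
  have hχle : χ (ωinf * Θ s) ≤ χ ωinf := by
    apply hχmono (Set.mem_Ici.mpr (by nlinarith : (0:ℝ) ≤ ωinf * Θ s))
      (Set.mem_Ici.mpr (le_of_lt hωinf))
    rw [hΘs]
    nlinarith
  rw [hΘs] at hχle
  have hbd := hΘbd s hs0 hsT
  rw [hΘs] at hbd
  nlinarith [mul_le_mul_of_nonneg_right hχle (by positivity : (0:ℝ) ≤ (2*C₁*Ω)^2),
    mul_le_mul_of_nonneg_left hsmall₁.le hχ0]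
end
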